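/- arXiv:math/0407186 — 4 statements merged into one kernel-verified Lean document; each statement's English description precedes it below -/
import Mathlib

section
/- Let X be a rational Urysohn space and let X̂ denote its metric completion, with the canonical isometric embedding of X into X̂. For every isometric bijection g : X̂ → X̂, every finite list of points u₁, …, uₘ ∈ X̂, and every real ε > 0, there exists an isometric bijection h : X → X whose unique continuous (isometric) extension ĥ : X̂ → X̂ satisfies dist(ĥ(uᵢ), g(uᵢ)) < ε for all i = 1, …, m. (That is, the isometry group of the rational Urysohn space is dense in the isometry group of its completion in the topology of pointwise convergence.) -/
open UniformSpace

noncomputable def natSeq {α : Type*} (f : (n : ℕ) → (Fin n → α) → α) : ℕ → α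
  | n => f n (fun i => natSeq f i)
decreasing_by exact i.isLt

theorem natSeq_eq {α : Type*} (f : (n : ℕ) → (Fin n → α) → α) (n : ℕ) :
    natSeq f n = f n (fun i => natSeq f i) := by rw [natSeq]

def IsRationalUrysohn (X : Type*) [MetricSpace X] : Prop :=
  Nonempty X ∧ Countable X ∧
    (∀ x y : X, ∃ q : ℚ, dist x y = (q : ℝ)) ∧
    (∀ (A : Finset X) (g : X → ℚ),
      (∀ a ∈ A, 0 ≤ g a) →
      (∀ a ∈ A, ∀ b ∈ A,
        |(g a : ℝ) - (g b : ℝ)| ≤ dist a b ∧ dist a b ≤ (g a : ℝ) + (g b : ℝ)) →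
      ∃ z : X, ∀ a ∈ A, dist z a = (g a : ℝ))

lemma onePoint {X : Type*} [MetricSpace X] (hX : IsRationalUrysohn X)
    (a b : ℕ → X) (n : ℕ)
    (hinv : ∀ i < n, ∀ j < n, dist (a i) (a j) = dist (b i) (b j))
    (t : X) : ∃ z : X, ∀ i < n, dist z (b i) = dist t (a i) := by
  classical
  obtain ⟨-, -, hrat, hext⟩ := hX
  choose q hq using hrat
  set g : X → ℚ := fun z =>
    if h : ∃ i, i < n ∧ b i = z then q t (a (Nat.find h)) else 0 with hg
  have key : ∀ i < n, (g (b i) : ℝ) = dist t (a i) := by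
    intro i hi
    have h : ∃ j, j < n ∧ b j = b i := ⟨i, hi, rfl⟩
    have hspec := Nat.find_spec h
    have haa : a (Nat.find h) = a i := by
      have := hinv _ hspec.1 _ hi
      rw [hspec.2, dist_self] at this
      exact dist_eq_zero.mp this
    simp only [hg, dif_pos h]
    rw [← hq, haa]
  have hnn : ∀ x ∈ (Finset.range n).image b, 0 ≤ g x := by
    intro x hx
    obtain ⟨i, hi, rfl⟩ := Finset.mem_image.mp hx
    have := key i (Finset.mem_range.mp hi)
    have h0 : (0:ℝ) ≤ (g (b i) : ℝ) := this ▸ dist_nonneg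
    exact_mod_cast h0
  have hpair : ∀ x ∈ (Finset.range n).image b, ∀ y ∈ (Finset.range n).image b,
      |(g x : ℝ) - (g y : ℝ)| ≤ dist x y ∧ dist x y ≤ (g x : ℝ) + (g y : ℝ) := by
    intro x hx y hy
    obtain ⟨i, hi, rfl⟩ := Finset.mem_image.mp hx
    obtain ⟨j, hj, rfl⟩ := Finset.mem_image.mp hy
    rw [Finset.mem_range] at hi hj
    rw [key i hi, key j hj, ← hinv i hi j hj]
    constructor
    · rw [dist_comm t (a i), dist_comm t (a j)]
      exact abs_dist_sub_le (a i) (a j) t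
    · rw [dist_comm t (a i)]
      exact dist_triangle (a i) t (a j)
  obtain ⟨z, hz⟩ := hext ((Finset.range n).image b) g hnn hpair
  refine ⟨z, fun i hi => ?_⟩
  rw [hz (b i) (Finset.mem_image.mpr ⟨i, Finset.mem_range.mpr hi, rfl⟩), key i hi]

lemma extendIso {X : Type*} [MetricSpace X] (hX : IsRationalUrysohn X)
    {m : ℕ} (x y : Fin m → X)
    (hxy : ∀ i j, dist (x i) (x j) = dist (y i) (y j)) :
    ∃ h : X ≃ᵢ X, ∀ i, h (x i) = y i := by
  classical
  have hne : Nonempty X := hX.1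
  have hcnt : Countable X := hX.2.1
  obtain ⟨e, he⟩ := exists_surjective_nat X
  have OP : ∀ (a b : ℕ → X) (n : ℕ) (t : X), ∃ z : X,
      (∀ i < n, ∀ j < n, dist (a i) (a j) = dist (b i) (b j)) →
      ∀ i < n, dist z (b i) = dist t (a i) := by
    intro a b n t
    by_cases hinv : ∀ i < n, ∀ j < n, dist (a i) (a j) = dist (b i) (b j)
    · obtain ⟨z, hz⟩ := onePoint hX a b n hinv t
      exact ⟨z, fun _ => hz⟩
    · exact ⟨Classical.arbitrary X, fun h => absurd h hinv⟩
  choose op hop using OP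
  set F : (n : ℕ) → (Fin n → X × X) → X × X := fun n prev =>
    if hn : n < m then (x ⟨n, hn⟩, y ⟨n, hn⟩)
    else
      let a' : ℕ → X := fun i => if h : i < n then (prev ⟨i, h⟩).1 else Classical.arbitrary X
      let b' : ℕ → X := fun i => if h : i < n then (prev ⟨i, h⟩).2 else Classical.arbitrary X
      if (n - m) % 2 = 0 then (e ((n - m) / 2), op a' b' n (e ((n - m) / 2)))
      else (op b' a' n (e ((n - m) / 2)), e ((n - m) / 2)) with hF
  set s : ℕ → X × X := natSeq F with hs
  set a : ℕ → X := fun n => (s n).1 with ha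
  set b : ℕ → X := fun n => (s n).2 with hb
  have hsn : ∀ n, s n = F n (fun i : Fin n => s i) := fun n => natSeq_eq F n
  have habase : ∀ (n) (hn : n < m), a n = x ⟨n, hn⟩ := by
    intro n hn
    rw [ha]; simp only [hsn n, hF]; rw [dif_pos hn]
  have hbbase : ∀ (n) (hn : n < m), b n = y ⟨n, hn⟩ := by
    intro n hn
    rw [hb]; simp only [hsn n, hF]; rw [dif_pos hn]
  have key : ∀ n, ∀ j < n, dist (a n) (a j) = dist (b n) (b j) := by
    intro n
    induction n using Nat.strong_induction_on with
    | _ n IH =>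
      have full : ∀ i < n, ∀ j < n, dist (a i) (a j) = dist (b i) (b j) := by
        intro i hi j hj
        rcases lt_trichotomy i j with h | h | h
        · rw [dist_comm (a i), dist_comm (b i)]; exact IH j hj i h
        · subst h; rw [dist_self, dist_self]
        · exact IH i hi j h
      intro j hj
      by_cases hn : n < m
      · rw [habase n hn, hbbase n hn, habase j (hj.trans hn), hbbase j (hj.trans hn)]
        exact hxy _ _
      · set A' : ℕ → X := fun i =>
          if h : i < n then a i else Classical.arbitrary X with hA'
        set B' : ℕ → X := fun i =>
          if h : i < n then b i else Classical.arbitrary X with hB'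
        set t : X := e ((n - m) / 2) with ht
        have hinvAB : ∀ i < n, ∀ j < n, dist (A' i) (A' j) = dist (B' i) (B' j) := by
          intro i hi j hj
          simp only [hA', hB', dif_pos hi, dif_pos hj]
          exact full i hi j hj
        have hinvBA : ∀ i < n, ∀ j < n, dist (B' i) (B' j) = dist (A' i) (A' j) :=
          fun i hi j hj => (hinvAB i hi j hj).symm
        by_cases hpar : (n - m) % 2 = 0
        · have hab1 : a n = t := by
            rw [ha]; simp only [hsn n, hF]; rw [dif_neg hn]; simp only [if_pos hpar]; rfl
          have hab2 : b n = op A' B' n t := by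
            rw [hb]; simp only [hsn n, hF]; rw [dif_neg hn]; simp only [if_pos hpar]; rfl
          rw [hab1, hab2]
          have := (hop A' B' n t hinvAB) j hj
          simp only [hB', hA', dif_pos hj] at this
          rw [this]
        · have hab1 : a n = op B' A' n t := by
            rw [ha]; simp only [hsn n, hF]; rw [dif_neg hn]; simp only [if_neg hpar]; rfl
          have hab2 : b n = t := by
            rw [hb]; simp only [hsn n, hF]; rw [dif_neg hn]; simp only [if_neg hpar]; rfl
          rw [hab1, hab2]
          have := (hop B' A' n t hinvBA) j hj
          simp only [hB', hA', dif_pos hj] at this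
          rw [this]
  have glob : ∀ i j, dist (a i) (a j) = dist (b i) (b j) := by
    intro i j
    rcases lt_trichotomy i j with h | h | h
    · rw [dist_comm (a i), dist_comm (b i)]; exact key j i h
    · subst h; rw [dist_self, dist_self]
    · exact key i j h
  have hae : ∀ k, a (m + 2 * k) = e k := by
    intro k
    have hn : ¬ m + 2 * k < m := by omega
    have h1 : m + 2 * k - m = 2 * k := by omega
    have h2 : 2 * k % 2 = 0 := by omega
    have h3 : 2 * k / 2 = k := by omega
    rw [ha]; simp only [hsn (m + 2 * k), hF]
    rw [dif_neg hn]
    simp only [h1, if_pos h2, h3]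
  have hbe : ∀ k, b (m + 2 * k + 1) = e k := by
    intro k
    have hn : ¬ m + 2 * k + 1 < m := by omega
    have h1 : m + 2 * k + 1 - m = 2 * k + 1 := by omega
    have h2 : ¬ (2 * k + 1) % 2 = 0 := by omega
    have h3 : (2 * k + 1) / 2 = k := by omega
    rw [hb]; simp only [hsn (m + 2 * k + 1), hF]
    rw [dif_neg hn]
    simp only [h1, if_neg h2, h3]
  have asurj : Function.Surjective a := by
    intro p; obtain ⟨k, hk⟩ := he p
    exact ⟨m + 2 * k, by rw [hae k, hk]⟩
  have bsurj : Function.Surjective b := by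
    intro p; obtain ⟨k, hk⟩ := he p
    exact ⟨m + 2 * k + 1, by rw [hbe k, hk]⟩
  set φ : X → X := fun p => b (Classical.choose (asurj p)) with hφ
  have hφa : ∀ p, a (Classical.choose (asurj p)) = p := fun p => Classical.choose_spec (asurj p)
  have hiso : Isometry φ := by
    refine Isometry.of_dist_eq fun p r => ?_
    rw [hφ]; dsimp only
    rw [← glob, hφa, hφa]
  have φsurj : Function.Surjective φ := by
    intro r; obtain ⟨n, rfl⟩ := bsurj r
    refine ⟨a n, dist_eq_zero.mp ?_⟩
    rw [hφ]; dsimp only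
    rw [← glob, hφa (a n), dist_self]
  have hmap : ∀ i : Fin m, φ (x i) = y i := by
    intro i
    have hai : a i.val = x i := by rw [habase i.val i.isLt]
    have hbi : b i.val = y i := by rw [hbbase i.val i.isLt]
    refine dist_eq_zero.mp ?_
    rw [hφ]; dsimp only
    rw [← hbi, ← glob, hφa (x i), ← hai, dist_self]
  refine ⟨⟨Equiv.ofBijective φ ⟨hiso.injective, φsurj⟩, hiso⟩, fun i => hmap i⟩

lemma approxPoints {X : Type*} [MetricSpace X] (hX : IsRationalUrysohn X)
    {m : ℕ} (hm : 0 < m) (v : Fin m → Completion X)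
    (D : Fin m → Fin m → ℚ) (hD : ∀ i j, (D i j : ℝ) = dist (v i) (v j))
    (β : ℝ) (hβ : 0 < β) :
    ∃ y : Fin m → X, (∀ i j, dist (y i) (y j) = (D i j : ℝ)) ∧
      ∀ i, dist ((y i : Completion X)) (v i) < 4 * β := by
  classical
  have hne : Nonempty X := hX.1
  have hext := hX.2.2.2
  choose q hq using hX.2.2.1
  haveI hfin : Nonempty (Fin m) := ⟨⟨0, hm⟩⟩
  have hw : ∀ i : Fin m, ∃ w : X, dist (v i) ((w : Completion X)) < β :=
    fun i => Metric.denseRange_iff.mp Completion.denseRange_coe (v i) β hβ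
  choose w hwlt using hw
  set e : Fin m → Fin m → ℚ := fun i j => q (w i) (w j) with he
  have hecast : ∀ i j, (e i j : ℝ) = dist (w i) (w j) := fun i j => (hq _ _).symm
  obtain ⟨γ, hγ1, hγ2⟩ := exists_rat_btwn (show 2*β < 3*β by linarith)
  have hDsymm : ∀ i j, (D i j : ℝ) = (D j i : ℝ) := by intro i j; rw [hD, hD, dist_comm]
  have hesymm : ∀ i j, (e i j : ℝ) = (e j i : ℝ) := by intro i j; rw [hecast, hecast, dist_comm]
  have hDnn : ∀ i j, (0:ℝ) ≤ (D i j : ℝ) := by intro i j; rw [hD]; exact dist_nonneg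
  have henn : ∀ i j, (0:ℝ) ≤ (e i j : ℝ) := by intro i j; rw [hecast]; exact dist_nonneg
  have hDtri : ∀ i j k, (D i j : ℝ) ≤ (D i k : ℝ) + (D k j : ℝ) := by
    intro i j k; rw [hD, hD, hD]; exact dist_triangle _ _ _
  have hetri : ∀ i j k, (e i j : ℝ) ≤ (e i k : ℝ) + (e k j : ℝ) := by
    intro i j k; rw [hecast, hecast, hecast]; exact dist_triangle _ _ _
  have hDe : ∀ i j, |(e i j : ℝ) - (D i j : ℝ)| ≤ 2*β := by
    intro i j
    rw [hecast, hD]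
    have h1 : dist (w i) (w j) = dist ((w i : Completion X)) ((w j : Completion X)) :=
      (Completion.dist_eq _ _).symm
    have h2 := dist_dist_dist_le ((w i : Completion X)) ((w j : Completion X)) (v i) (v j)
    rw [Real.dist_eq] at h2
    have h3 : dist ((w i : Completion X)) (v i) < β := by rw [dist_comm]; exact hwlt i
    have h4 : dist ((w j : Completion X)) (v j) < β := by rw [dist_comm]; exact hwlt j
    rw [h1]
    linarith
  set c : Fin m → Fin m → ℚ :=
    fun i j => Finset.univ.inf' Finset.univ_nonempty (fun k => D i k + γ + e k j) with hc
  have hclk : ∀ i j k, (c i j : ℝ) ≤ (D i k : ℝ) + (γ : ℝ) + (e k j : ℝ) := by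
    intro i j k
    have h := Finset.inf'_le (f := fun k => D i k + γ + e k j) (Finset.mem_univ k)
    have h2 : c i j ≤ D i k + γ + e k j := h
    exact_mod_cast h2
  have hcex : ∀ i j, ∃ k, (c i j : ℝ) = (D i k : ℝ) + (γ : ℝ) + (e k j : ℝ) := by
    intro i j
    obtain ⟨k, -, hk⟩ :=
      Finset.exists_mem_eq_inf' (s := Finset.univ) Finset.univ_nonempty
        (fun k => D i k + γ + e k j)
    exact ⟨k, by exact_mod_cast congrArg (fun t : ℚ => (t : ℝ)) hk⟩
  have L1 : ∀ i j, (e i j : ℝ) ≤ (c i j : ℝ) := by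
    intro i j
    obtain ⟨k, hk⟩ := hcex i j
    have h1 := hDe i k
    rw [abs_le] at h1
    have h2 := hetri i j k
    rw [hk]; linarith
  have L2 : ∀ i j, (D i j : ℝ) ≤ (c i j : ℝ) := by
    intro i j
    obtain ⟨k, hk⟩ := hcex i j
    have h1 := hDe k j
    rw [abs_le] at h1
    have h2 := hDtri i j k
    rw [hk]; linarith
  have hcnn : ∀ i j, (0:ℝ) ≤ (c i j : ℝ) := fun i j => le_trans (hDnn i j) (L2 i j)
  have F1 : ∀ i j l, (c i j : ℝ) ≤ (c i l : ℝ) + (e l j : ℝ) := by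
    intro i j l
    obtain ⟨k, hk⟩ := hcex i l
    have h1 := hclk i j k
    have h2 := hetri k j l
    rw [hk]; linarith
  have F3 : ∀ i l j, (c i j : ℝ) ≤ (c l j : ℝ) + (D i l : ℝ) := by
    intro i l j
    obtain ⟨k, hk⟩ := hcex l j
    have h1 := hclk i j k
    have h2 := hDtri i k l
    rw [hk]; linarith
  have F5 : ∀ i l j, (D i l : ℝ) ≤ (c i j : ℝ) + (c l j : ℝ) := by
    intro i l j
    obtain ⟨k, hk⟩ := hcex i j
    obtain ⟨k', hk'⟩ := hcex l j
    have h1 := hetri k k' j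
    have h2 : (e j k' : ℝ) = (e k' j : ℝ) := hesymm j k'
    have h3 := hDe k k'
    rw [abs_le] at h3
    have h4 := hDtri i l k
    have h5 := hDtri k l k'
    have h6 : (D k' l : ℝ) = (D l k' : ℝ) := hDsymm k' l
    rw [hk, hk']; linarith
  have F2 : ∀ i j l, (e j l : ℝ) ≤ (c i j : ℝ) + (c i l : ℝ) := by
    intro i j l
    have h1 := L1 i j
    have h2 := L1 i l
    have h3 := hetri j l i
    have h4 : (e j i : ℝ) = (e i j : ℝ) := hesymm j i
    linarith
  have EX : ∀ (n : ℕ) (hn : n < m) (p : Fin n → X), ∃ z : X,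
      ((∀ (l : Fin n) (j : Fin m), dist (p l) (w j) = (c ⟨l.val, l.isLt.trans hn⟩ j : ℝ)) ∧
       (∀ l l' : Fin n, dist (p l) (p l') =
          (D ⟨l.val, l.isLt.trans hn⟩ ⟨l'.val, l'.isLt.trans hn⟩ : ℝ))) →
      ((∀ j : Fin m, dist z (w j) = (c ⟨n, hn⟩ j : ℝ)) ∧
       (∀ l : Fin n, dist z (p l) = (D ⟨n, hn⟩ ⟨l.val, l.isLt.trans hn⟩ : ℝ))) := by
    intro n hn p
    by_cases hasm : (∀ (l : Fin n) (j : Fin m), dist (p l) (w j) = (c ⟨l.val, l.isLt.trans hn⟩ j : ℝ)) ∧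
       (∀ l l' : Fin n, dist (p l) (p l') =
          (D ⟨l.val, l.isLt.trans hn⟩ ⟨l'.val, l'.isLt.trans hn⟩ : ℝ))
    swap
    · exact ⟨Classical.arbitrary X, fun h => absurd h hasm⟩
    obtain ⟨hpw, hpp⟩ := hasm
    set i : Fin m := ⟨n, hn⟩ with hi
    set lift : Fin n → Fin m := fun l => ⟨l.val, l.isLt.trans hn⟩ with hlift
    -- value coherence lemmas
    have V1 : ∀ l l' : Fin n, p l = p l' → (D i (lift l) : ℝ) = (D i (lift l') : ℝ) := by
      intro l l' hpl
      have h0 : (D (lift l) (lift l') : ℝ) = 0 := by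
        rw [← hpp l l', hpl, dist_self]
      have hv : v (lift l) = v (lift l') := by
        rw [hD] at h0; exact dist_eq_zero.mp h0
      rw [hD, hD, hv]
    have V2 : ∀ j j' : Fin m, w j = w j' → c i j = c i j' := by
      intro j j' hww
      have he' : ∀ k, e k j = e k j' := by
        intro k
        have : (e k j : ℝ) = (e k j' : ℝ) := by rw [hecast, hecast, hww]
        exact_mod_cast this
      simp only [hc]
      congr 1
      funext k
      rw [he' k]
    have V3 : ∀ (l : Fin n) (j : Fin m), p l = w j → (c i j : ℝ) = (D i (lift l) : ℝ) := by
      intro l j hpl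
      have h0 : (c (lift l) j : ℝ) = 0 := by rw [← hpw l j, hpl, dist_self]
      have h1 := F3 i (lift l) j
      have h2 := F5 i (lift l) j
      have h3 : (D i (lift l) : ℝ) = (D (lift l) i : ℝ)  := hDsymm _ _
      rw [h0] at h1 h2
      linarith [le_antisymm (by linarith) (by linarith : (D i (lift l) : ℝ) ≤ (c i j : ℝ))]
    set A : Finset X := (Finset.univ.image w) ∪ (Finset.univ.image p) with hA
    set g : X → ℚ := fun z =>
      if h : ∃ l : Fin n, p l = z then D i (lift (Classical.choose h))
      else if h2 : ∃ j : Fin m, w j = z then c i (Classical.choose h2) else 0 with hg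
    have G2 : ∀ l : Fin n, (g (p l) : ℝ) = (D i (lift l) : ℝ) := by
      intro l
      have h : ∃ l' : Fin n, p l' = p l := ⟨l, rfl⟩
      simp only [hg, dif_pos h]
      exact V1 _ l (Classical.choose_spec h)
    have G1 : ∀ j : Fin m, (g (w j) : ℝ) = (c i j : ℝ) := by
      intro j
      by_cases h : ∃ l : Fin n, p l = w j
      · simp only [hg, dif_pos h]
        exact (V3 _ j (Classical.choose_spec h)).symm
      · have h2 : ∃ j' : Fin m, w j' = w j := ⟨j, rfl⟩
        simp only [hg, dif_neg h, dif_pos h2]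
        exact_mod_cast congrArg (fun t : ℚ => (t : ℝ)) (V2 _ j (Classical.choose_spec h2))
    have hmemw : ∀ j : Fin m, w j ∈ A := fun j =>
      Finset.mem_union_left _ (Finset.mem_image_of_mem w (Finset.mem_univ j))
    have hmemp : ∀ l : Fin n, p l ∈ A := fun l =>
      Finset.mem_union_right _ (Finset.mem_image_of_mem p (Finset.mem_univ l))
    have hcase : ∀ z ∈ A, (∃ j : Fin m, w j = z) ∨ (∃ l : Fin n, p l = z) := by
      intro z hz
      rcases Finset.mem_union.mp hz with h | h
      · obtain ⟨j, -, rfl⟩ := Finset.mem_image.mp h; exact Or.inl ⟨j, rfl⟩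
      · obtain ⟨l, -, rfl⟩ := Finset.mem_image.mp h; exact Or.inr ⟨l, rfl⟩
    have hnn : ∀ z ∈ A, 0 ≤ g z := by
      intro z hz
      rcases hcase z hz with ⟨j, rfl⟩ | ⟨l, rfl⟩
      · have : (0:ℝ) ≤ (g (w j) : ℝ) := by rw [G1]; exact hcnn i j
        exact_mod_cast this
      · have : (0:ℝ) ≤ (g (p l) : ℝ) := by rw [G2]; exact hDnn i (lift l)
        exact_mod_cast this
    have hpair : ∀ z ∈ A, ∀ z' ∈ A,
        |(g z : ℝ) - (g z' : ℝ)| ≤ dist z z' ∧ dist z z' ≤ (g z : ℝ) + (g z' : ℝ) := by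
      have main : ∀ z ∈ A, ∀ z' ∈ A,
          ((g z : ℝ) - (g z' : ℝ) ≤ dist z z') ∧ dist z z' ≤ (g z : ℝ) + (g z' : ℝ) := by
        intro z hz z' hz'
        rcases hcase z hz with ⟨j, rfl⟩ | ⟨l, rfl⟩ <;>
          rcases hcase z' hz' with ⟨j', rfl⟩ | ⟨l', rfl⟩
        · -- (w j, w j')
          rw [G1, G1, ← hecast]
          constructor
          · have h1 := F1 i j j'
            have h2 := hesymm j' j
            linarith
          · exact le_trans (le_of_eq rfl) (F2 i j j')
        · -- (w j, p l')
          rw [G1, G2, dist_comm, hpw l' j]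
          constructor
          · have := F3 i (lift l') j; linarith
          · have h1 := F3 (lift l') i j
            have h2 := hDsymm (lift l') i
            linarith
        · -- (p l, w j')
          rw [G2, G1, hpw l j']
          constructor
          · have := F5 i (lift l) j'; linarith
          · have h1 := F3 (lift l) i j'
            have h2 := hDsymm (lift l) i
            linarith
        · -- (p l, p l')
          have hd : dist (p l) (p l') = (D (lift l) (lift l') : ℝ) := hpp l l'
          rw [G2, G2, hd]
          constructor
          · have h1 := hDtri i (lift l) (lift l')
            have h2 := hDsymm (lift l') (lift l)
            linarith
          · have h1 := hDtri (lift l) (lift l') i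
            have h2 := hDsymm (lift l) i
            linarith
      intro z hz z' hz'
      refine ⟨abs_sub_le_iff.mpr ⟨(main z hz z' hz').1, ?_⟩, (main z hz z' hz').2⟩
      rw [dist_comm]
      exact (main z' hz' z hz).1
    obtain ⟨z, hz⟩ := hext A g hnn hpair
    refine ⟨z, fun _ => ⟨fun j => ?_, fun l => ?_⟩⟩
    · rw [hz (w j) (hmemw j), G1]
    · rw [hz (p l) (hmemp l), G2]
  set G : (n : ℕ) → (Fin n → X) → X := fun n p =>
    if hn : n < m then Classical.choose (EX n hn p) else Classical.arbitrary X with hG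
  set Y : ℕ → X := natSeq G with hY
  have ymain : ∀ (n : ℕ), ∀ (hn : n < m),
      (∀ j : Fin m, dist (Y n) (w j) = (c ⟨n, hn⟩ j : ℝ)) ∧
      (∀ l, ∀ hl : l < n, dist (Y n) (Y l) = (D ⟨n, hn⟩ ⟨l, hl.trans hn⟩ : ℝ)) := by
    intro n
    induction n using Nat.strong_induction_on with
    | _ n IH =>
      intro hn
      have hy : Y n = Classical.choose (EX n hn (fun l : Fin n => Y l.val)) := by
        rw [hY]; rw [natSeq_eq]; rw [← hY]
        simp only [hG]; rw [dif_pos hn]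
      have hspec := Classical.choose_spec (EX n hn (fun l : Fin n => Y l.val))
      rw [← hy] at hspec
      have hinv : (∀ (l : Fin n) (j : Fin m),
            dist (Y l.val) (w j) = (c ⟨l.val, l.isLt.trans hn⟩ j : ℝ)) ∧
          (∀ l l' : Fin n, dist (Y l.val) (Y l'.val) =
            (D ⟨l.val, l.isLt.trans hn⟩ ⟨l'.val, l'.isLt.trans hn⟩ : ℝ)) := by
        constructor
        · intro l j
          exact (IH l.val l.isLt (l.isLt.trans hn)).1 j
        · intro l l'
          rcases lt_trichotomy l.val l'.val with h | h | h
          · rw [dist_comm]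
            rw [(IH l'.val l'.isLt (l'.isLt.trans hn)).2 l.val h]
            rw [hDsymm]
          · have : (D ⟨l.val, l.isLt.trans hn⟩ ⟨l'.val, l'.isLt.trans hn⟩ : ℝ) = 0 := by
              rw [hD]
              have : (⟨l.val, l.isLt.trans hn⟩ : Fin m) = ⟨l'.val, l'.isLt.trans hn⟩ := by
                exact Fin.ext h
              rw [this, dist_self]
            rw [this, h, dist_self]
          · exact (IH l.val l.isLt (l.isLt.trans hn)).2 l'.val h
      obtain ⟨hzw, hzp⟩ := hspec hinv
      refine ⟨hzw, fun l hl => ?_⟩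
      exact hzp ⟨l, hl⟩
  refine ⟨fun i => Y i.val, ?_, ?_⟩
  · intro i j
    rcases lt_trichotomy i.val j.val with h | h | h
    · rw [dist_comm]
      have := (ymain j.val j.isLt).2 i.val h
      rw [this, hDsymm]
    · have hij : i = j := Fin.ext h
      subst hij
      rw [dist_self, hD, dist_self]
    · have := (ymain i.val i.isLt).2 j.val h
      rw [this]
  · intro i
    have h1 : dist ((Y i.val : Completion X)) (v i) ≤
        dist (Y i.val) (w i) + dist ((w i : Completion X)) (v i) := by
      have := dist_triangle ((Y i.val : Completion X)) ((w i : Completion X)) (v i)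
      rwa [Completion.dist_eq] at this
    have h2 : dist (Y i.val) (w i) = (c i i : ℝ) := by
      have := (ymain i.val i.isLt).1 i
      rw [this]
    have h3 := hclk i i i
    have h4 : (D i i : ℝ) = 0 := by rw [hD, dist_self]
    have h5 : (e i i : ℝ) = 0 := by rw [hecast, dist_self]
    have h6 : dist ((w i : Completion X)) (v i) < β := by rw [dist_comm]; exact hwlt i
    rw [h2] at h1
    linarith


/-- The isometry group of the rational Urysohn space is dense (pointwise) in the
isometry group of its completion. -/
theorem stmt_0 (X : Type*) [MetricSpace X] (hX : IsRationalUrysohn X)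
    (g : UniformSpace.Completion X ≃ᵢ UniformSpace.Completion X)
    (m : ℕ) (u : Fin m → UniformSpace.Completion X) (ε : ℝ) (hε : 0 < ε) :
    ∃ h : X ≃ᵢ X,
      ∀ i : Fin m, dist (UniformSpace.Completion.map (⇑h) (u i)) (g (u i)) < ε := by
  classical
  rcases Nat.eq_zero_or_pos m with rfl | hm
  · exact ⟨IsometryEquiv.refl X, fun i => i.elim0⟩
  set β : ℝ := ε / 8 with hβdef
  have hβ : 0 < β := by positivity
  have hx : ∀ i : Fin m, ∃ x : X, dist (u i) ((x : Completion X)) < β :=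
    fun i => Metric.denseRange_iff.mp Completion.denseRange_coe (u i) β hβ
  choose x hxlt using hx
  choose q hq using hX.2.2.1
  set v : Fin m → Completion X := fun i => g ((x i : Completion X)) with hv
  set D : Fin m → Fin m → ℚ := fun i j => q (x i) (x j) with hDdef
  have hD : ∀ i j, (D i j : ℝ) = dist (v i) (v j) := by
    intro i j
    rw [hv]; dsimp only
    rw [g.dist_eq, Completion.dist_eq, ← hq]
  obtain ⟨y, hyD, hyv⟩ := approxPoints hX hm v D hD β hβ
  have hxy : ∀ i j, dist (x i) (x j) = dist (y i) (y j) := by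
    intro i j
    rw [hyD i j, ← hq]
  obtain ⟨h, hmap⟩ := extendIso hX x y hxy
  refine ⟨h, fun i => ?_⟩
  have hiso : Isometry (Completion.map (⇑h)) := h.isometry.completion_map
  have hmc : Completion.map (⇑h) ((x i : Completion X)) = ((y i : Completion X)) := by
    rw [Completion.map_coe h.isometry.uniformContinuous, hmap i]
  have t2 : dist (Completion.map (⇑h) (u i)) (Completion.map (⇑h) ((x i : Completion X)))
      = dist (u i) ((x i : Completion X)) := hiso.dist_eq _ _
  have t1 : dist (Completion.map (⇑h) (u i)) (g (u i)) ≤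
      dist (u i) ((x i : Completion X)) + dist ((y i : Completion X)) (g (u i)) := by
    calc dist (Completion.map (⇑h) (u i)) (g (u i))
        ≤ dist (Completion.map (⇑h) (u i)) (Completion.map (⇑h) ((x i : Completion X))) +
            dist (Completion.map (⇑h) ((x i : Completion X))) (g (u i)) := dist_triangle _ _ _
      _ = dist (u i) ((x i : Completion X)) + dist ((y i : Completion X)) (g (u i)) := by
          rw [t2, hmc]
  have t3 : dist ((y i : Completion X)) (g (u i)) ≤
      dist ((y i : Completion X)) (v i) + dist (v i) (g (u i)) := dist_triangle _ _ _
  have t4 : dist (v i) (g (u i)) = dist ((x i : Completion X)) (u i) := by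
    rw [hv]; dsimp only; rw [g.dist_eq]
  have t4' : dist ((x i : Completion X)) (u i) = dist (u i) ((x i : Completion X)) :=
    dist_comm _ _
  have t5 := hxlt i
  have t6 := hyv i
  have hfin : dist (Completion.map (⇑h) (u i)) (g (u i)) < β + (4 * β + β) := by linarith
  rw [hβdef] at hfin
  linarith
end

section
/- Let X be a rational Urysohn space. Given a real ε > 0, an integer n ≥ 1, and points v₁, …, vₙ, v₁′, …, v_{n−1}′, vₙ″ ∈ X such that dist(vᵢ′, vⱼ′) = dist(vᵢ, vⱼ) for all 1 ≤ i, j ≤ n−1 and |dist(vᵢ′, vₙ″) − dist(vᵢ, vₙ)| < ε for all 1 ≤ i ≤ n−1, there exists a point vₙ′ ∈ X such that dist(vᵢ′, vₙ′) = dist(vᵢ, vₙ) for all 1 ≤ i ≤ n−1 and dist(vₙ′, vₙ″) < ε. -/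
theorem stmt_1 (X : Type*) [MetricSpace X] (hX : IsRationalUrysohn X)
    (ε : ℝ) (hε : 0 < ε) (m : ℕ) (v v' : Fin m → X) (vn vn'' : X)
    (hiso : ∀ i j : Fin m, dist (v' i) (v' j) = dist (v i) (v j))
    (happrox : ∀ i : Fin m, |dist (v' i) vn'' - dist (v i) vn| < ε) :
    ∃ vn' : X, (∀ i : Fin m, dist (v' i) vn' = dist (v i) vn) ∧ dist vn' vn'' < ε := by
  classical
  obtain ⟨-, -, hrat, hext⟩ := hX
  choose q hq using fun i => hrat (v i) vn
  choose r hr using fun i => hrat (v' i) vn''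
  have hq0 : ∀ i, (0:ℚ) ≤ q i := by
    intro i
    have h := dist_nonneg (x := v i) (y := vn)
    rw [hq i] at h; exact_mod_cast h
  have hr0 : ∀ i, (0:ℚ) ≤ r i := by
    intro i
    have h := dist_nonneg (x := v' i) (y := vn'')
    rw [hr i] at h; exact_mod_cast h
  set S : Finset ℚ := insert 0 (Finset.univ.image fun i => |q i - r i|) with hS
  have hSne : S.Nonempty := ⟨0, Finset.mem_insert_self _ _⟩
  set δ : ℚ := S.max' hSne with hδ
  have hδ0 : (0:ℚ) ≤ δ := by
    apply Finset.le_max'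
    rw [hS]; exact Finset.mem_insert_self _ _
  have hδge : ∀ i, |q i - r i| ≤ δ := by
    intro i
    apply Finset.le_max'
    rw [hS]
    exact Finset.mem_insert_of_mem (Finset.mem_image.mpr ⟨i, Finset.mem_univ i, rfl⟩)
  -- key inequality: |q j - r j| ≤ q i + r i for all i j
  have hkey : ∀ i j, |q j - r j| ≤ q i + r i := by
    intro i j
    have hqtri : (q j : ℝ) ≤ (q i : ℝ) + dist (v i) (v j) := by
      rw [← hq, ← hq]
      calc dist (v j) vn ≤ dist (v j) (v i) + dist (v i) vn := dist_triangle _ _ _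
        _ = dist (v i) vn + dist (v i) (v j) := by rw [dist_comm (v j) (v i)]; ring
    have hrtri : (r j : ℝ) ≤ (r i : ℝ) + dist (v i) (v j) := by
      rw [← hr, ← hr, ← hiso]
      calc dist (v' j) vn'' ≤ dist (v' j) (v' i) + dist (v' i) vn'' := dist_triangle _ _ _
        _ = dist (v' i) vn'' + dist (v' i) (v' j) := by rw [dist_comm (v' j) (v' i)]; ring
    have hd1 : dist (v i) (v j) ≤ (q i : ℝ) + (q j : ℝ) := by
      rw [← hq, ← hq]
      calc dist (v i) (v j) ≤ dist (v i) vn + dist vn (v j) := dist_triangle _ _ _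
        _ = dist (v i) vn + dist (v j) vn := by rw [dist_comm vn (v j)]
    have hd2 : dist (v i) (v j) ≤ (r i : ℝ) + (r j : ℝ) := by
      rw [← hr, ← hr, ← hiso]
      calc dist (v' i) (v' j) ≤ dist (v' i) vn'' + dist vn'' (v' j) := dist_triangle _ _ _
        _ = dist (v' i) vn'' + dist (v' j) vn'' := by rw [dist_comm vn'' (v' j)]
    rw [abs_sub_le_iff]
    constructor
    · -- q j - r j ≤ q i + r i  ⟺  q j ≤ q i + r i + r j
      have : (q j : ℝ) - (r j : ℝ) ≤ (q i : ℝ) + (r i : ℝ) := by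
        have := hqtri.trans (by linarith [hd2] : (q i : ℝ) + dist (v i) (v j) ≤ q i + r i + r j)
        linarith
      exact_mod_cast this
    · have : (r j : ℝ) - (q j : ℝ) ≤ (q i : ℝ) + (r i : ℝ) := by
        have := hrtri.trans (by linarith [hd1] : (r i : ℝ) + dist (v i) (v j) ≤ r i + q i + q j)
        linarith
      exact_mod_cast this
  have hδle : ∀ i, δ ≤ q i + r i := by
    intro i
    apply Finset.max'_le
    intro x hx
    rw [hS] at hx
    rcases Finset.mem_insert.mp hx with h0 | h1
    · subst h0; exact add_nonneg (hq0 i) (hr0 i)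
    · obtain ⟨j, -, rfl⟩ := Finset.mem_image.mp h1
      exact hkey i j
  have hδε : (δ : ℝ) < ε := by
    have hmem : δ ∈ insert (0:ℚ) (Finset.univ.image fun i => |q i - r i|) :=
      Finset.max'_mem S hSne
    rcases Finset.mem_insert.mp hmem with h0 | h1
    · rw [h0]; exact_mod_cast hε
    · obtain ⟨j, -, hj⟩ := Finset.mem_image.mp h1
      have := happrox j
      rw [hq, hr] at this
      have h2 : ((|q j - r j| : ℚ) : ℝ) < ε := by
        push_cast
        rw [abs_sub_comm]
        exact this
      rw [← hj]
      exact h2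
  -- define g
  set g : X → ℚ := fun x => if h : ∃ i, v' i = x then q h.choose else δ with hg
  have hgv' : ∀ i, g (v' i) = q i := by
    intro i
    have h : ∃ j, v' j = v' i := ⟨i, rfl⟩
    have hc : v' h.choose = v' i := h.choose_spec
    have hv : v h.choose = v i := by
      have hd : dist (v h.choose) (v i) = 0 := by rw [← hiso, hc, dist_self]
      exact eq_of_dist_eq_zero hd
    have : (q h.choose : ℝ) = (q i : ℝ) := by rw [← hq, ← hq, hv]
    rw [hg]; simp only [dif_pos h]; exact_mod_cast this
  have hgvn : g vn'' = δ := by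
    by_cases h : ∃ i, v' i = vn''
    · have hc : v' h.choose = vn'' := h.choose_spec
      have hrc : r h.choose = 0 := by
        have : (r h.choose : ℝ) = 0 := by rw [← hr, hc, dist_self]
        exact_mod_cast this
      have h1 : q h.choose ≤ δ := by
        have := hδge h.choose
        rw [hrc, sub_zero, abs_of_nonneg (hq0 _)] at this
        exact this
      have h2 : δ ≤ q h.choose := by
        have := hδle h.choose
        rw [hrc, add_zero] at this
        exact this
      rw [hg]; simp only [dif_pos h]
      exact le_antisymm h1 h2
    · rw [hg]; simp only [dif_neg h]
  -- the pair condition between v' i and vn''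
  have hpair : ∀ i, |(q i : ℝ) - (δ : ℝ)| ≤ dist (v' i) vn'' ∧
      dist (v' i) vn'' ≤ (q i : ℝ) + (δ : ℝ) := by
    intro i
    have h1 : |q i - δ| ≤ r i := by
      rw [abs_sub_le_iff]
      constructor
      · linarith [le_abs_self (q i - r i), hδge i]
      · linarith [hδle i]
    have h2 : r i ≤ q i + δ := by
      have := hδge i
      linarith [neg_abs_le (q i - r i)]
    rw [hr i]
    constructor
    · exact_mod_cast h1
    · exact_mod_cast h2
  -- set up the finite set
  set A : Finset X := insert vn'' (Finset.univ.image v') with hA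
  have hmemA : ∀ a ∈ A, a = vn'' ∨ ∃ i, a = v' i := by
    intro a ha
    rw [hA] at ha
    rcases Finset.mem_insert.mp ha with h | h
    · exact Or.inl h
    · obtain ⟨i, -, rfl⟩ := Finset.mem_image.mp h
      exact Or.inr ⟨i, rfl⟩
  have hnonneg : ∀ a ∈ A, 0 ≤ g a := by
    intro a ha
    rcases hmemA a ha with rfl | ⟨i, rfl⟩
    · rw [hgvn]; exact hδ0
    · rw [hgv']; exact hq0 i
  have hcond : ∀ a ∈ A, ∀ b ∈ A,
      |(g a : ℝ) - (g b : ℝ)| ≤ dist a b ∧ dist a b ≤ (g a : ℝ) + (g b : ℝ) := by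
    intro a ha b hb
    rcases hmemA a ha with rfl | ⟨i, rfl⟩ <;> rcases hmemA b hb with h | ⟨j, hj⟩
    · subst h
      rw [hgvn, dist_self, sub_self, abs_zero]
      constructor
      · exact le_refl 0
      · positivity
    · subst hj
      rw [hgvn, hgv']
      have := hpair j
      rw [dist_comm, abs_sub_comm]
      exact ⟨this.1, by linarith [this.2]⟩
    · subst h
      rw [hgvn, hgv']
      exact hpair i
    · subst hj
      rw [hgv', hgv', ← hq, ← hq, hiso]
      exact ⟨abs_dist_sub_le _ _ _, by
        calc dist (v i) (v j) ≤ dist (v i) vn + dist vn (v j) := dist_triangle _ _ _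
          _ = dist (v i) vn + dist (v j) vn := by rw [dist_comm vn (v j)]⟩
  obtain ⟨z, hz⟩ := hext A g hnonneg hcond
  refine ⟨z, ?_, ?_⟩
  · intro i
    have hmem : v' i ∈ A := by
      rw [hA]
      exact Finset.mem_insert_of_mem (Finset.mem_image.mpr ⟨i, Finset.mem_univ i, rfl⟩)
    rw [dist_comm, hz (v' i) hmem, hgv', hq]
  · have hmem : vn'' ∈ A := by rw [hA]; exact Finset.mem_insert_self _ _
    rw [hz vn'' hmem, hgvn]
    exact hδε
end

section
/- Let X be a rational Urysohn space, let k ≥ 0 be a real number, and let a₁, …, aₙ and b₁, …, bₙ be points of X such that dist(aᵢ, aⱼ) = dist(bᵢ, bⱼ) for all i, j and dist(aᵢ, bᵢ) ≤ k for all i. Then there exists an isometric bijection g : X → X such that g(aᵢ) = bᵢ for all i and dist(x, g(x)) ≤ k for every x ∈ X. (In particular, the bounded isometries of X form a dense subgroup of its isometry group.) -/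
open Classical in
lemma ext1 {X : Type*} [MetricSpace X]
    (hrat : ∀ x y : X, ∃ q : ℚ, dist x y = (q : ℝ))
    (hext : ∀ (A : Finset X) (g : X → ℚ),
      (∀ a ∈ A, 0 ≤ g a) →
      (∀ a ∈ A, ∀ b ∈ A,
        |(g a : ℝ) - (g b : ℝ)| ≤ dist a b ∧ dist a b ≤ (g a : ℝ) + (g b : ℝ)) →
      ∃ z : X, ∀ a ∈ A, dist z a = (g a : ℝ))
    (k : ℝ) (hk : 0 ≤ k) (m : ℕ) (f g : ℕ → X)
    (hiso : ∀ i < m, ∀ j < m, dist (f i) (f j) = dist (g i) (g j))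
    (hbdd : ∀ i < m, dist (f i) (g i) ≤ k)
    (x : X) :
    ∃ y : X, dist x y ≤ k ∧ ∀ i < m, dist x (f i) = dist y (g i) := by
  rcases Nat.eq_zero_or_pos m with hm | hm
  · exact ⟨x, by simpa using hk, fun i hi => absurd hi (by omega)⟩
  choose dq hdq using fun i => hrat x (f i)
  choose eq' heq using fun i => hrat x (g i)
  set A : Finset X := insert x ((Finset.range m).image g) with hA
  have hne : (Finset.range m).Nonempty := Finset.nonempty_range_iff.mpr (by omega)
  set rq : ℚ := (Finset.range m).sup' hne (fun i => |dq i - eq' i|) with hrq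
  -- lower bound facts
  have hL : ∀ i < m, |dist x (f i) - dist x (g i)| ≤ (rq : ℝ) := by
    intro i hi
    have : |dq i - eq' i| ≤ rq :=
      Finset.le_sup' (fun i => |dq i - eq' i|) (Finset.mem_range.mpr hi)
    rw [hdq, heq]
    exact_mod_cast this
  obtain ⟨i0, hi0mem, hi0⟩ := Finset.exists_mem_eq_sup' hne (fun i => |dq i - eq' i|)
  have hi0m : i0 < m := Finset.mem_range.mp hi0mem
  have hi0R : (rq : ℝ) = |dist x (f i0) - dist x (g i0)| := by
    rw [hdq, heq]; exact_mod_cast congrArg (fun q : ℚ => (q : ℝ)) hi0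
  have hr0 : (0:ℝ) ≤ (rq : ℝ) := by rw [hi0R]; exact abs_nonneg _
  have hrk : (rq : ℝ) ≤ k := by
    rw [hi0R]
    calc |dist x (f i0) - dist x (g i0)| = |dist (f i0) x - dist (g i0) x| := by
          rw [dist_comm x (f i0), dist_comm x (g i0)]
      _ ≤ dist (f i0) (g i0) := abs_dist_sub_le _ _ _
      _ ≤ k := hbdd i0 hi0m
  have hrU : ∀ j < m, (rq : ℝ) ≤ dist x (f j) + dist x (g j) := by
    intro j hj
    have t1 : dist x (f i0) ≤ dist x (f j) + dist (f j) (f i0) := dist_triangle _ _ _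
    have t2 : dist (f j) (f i0) = dist (g j) (g i0) := hiso j hj i0 hi0m
    have t3 : dist (g j) (g i0) ≤ dist (g j) x + dist x (g i0) := dist_triangle _ _ _
    have t4 : dist x (g i0) ≤ dist x (g j) + dist (g j) (g i0) := dist_triangle _ _ _
    have t5 : dist (g j) x = dist x (g j) := dist_comm _ _
    have t6 : dist (g j) (g i0) = dist (f j) (f i0) := (hiso j hj i0 hi0m).symm
    have t7 : dist (f j) (f i0) ≤ dist (f j) x + dist x (f i0) := dist_triangle _ _ _
    have t8 : dist (f j) x = dist x (f j) := dist_comm _ _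
    rw [hi0R]
    rcases abs_cases (dist x (f i0) - dist x (g i0)) with ⟨h, _⟩ | ⟨h, _⟩ <;> rw [h] <;> linarith
  -- the function
  set gq : X → ℚ := fun z =>
    if z = x then rq else if h : ∃ i, i < m ∧ g i = z then dq h.choose else 0 with hgq
  have hval : ∀ a ∈ A, (a = x ∧ gq a = rq) ∨
      (a ≠ x ∧ ∃ i, i < m ∧ g i = a ∧ (gq a : ℝ) = dist x (f i)) := by
    intro a ha
    by_cases hax : a = x
    · exact Or.inl ⟨hax, by simp [hgq, hax]⟩
    · right
      refine ⟨hax, ?_⟩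
      rw [hA, Finset.mem_insert] at ha
      rcases ha with h | h
      · exact absurd h hax
      · obtain ⟨i, hi, hgi⟩ := Finset.mem_image.mp h
        have hex : ∃ i, i < m ∧ g i = a := ⟨i, Finset.mem_range.mp hi, hgi⟩
        refine ⟨hex.choose, hex.choose_spec.1, hex.choose_spec.2, ?_⟩
        simp only [hgq, if_neg hax, dif_pos hex]
        exact (hdq _).symm
  have hxeq : ∀ i < m, g i = x → (rq : ℝ) = dist x (f i) := by
    intro i hi hgi
    have he0 : dist x (g i) = 0 := by rw [hgi, dist_self]
    have h1 := hL i hi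
    have h2 := hrU i hi
    rw [he0] at h1 h2
    rcases abs_cases (dist x (f i) - 0) with ⟨h, _⟩ | ⟨h, _⟩ <;> rw [h] at h1 <;>
      [linarith; (have := dist_nonneg (x := x) (y := f i); linarith)]
  -- apply extension
  have hnn : ∀ a ∈ A, 0 ≤ gq a := by
    intro a ha
    rcases hval a ha with ⟨_, h⟩ | ⟨_, i, _, _, h⟩
    · rw [h]; exact_mod_cast hr0
    · have : (0:ℝ) ≤ (gq a : ℝ) := h ▸ dist_nonneg
      exact_mod_cast this
  have hpair : ∀ a ∈ A, ∀ b ∈ A,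
      |(gq a : ℝ) - (gq b : ℝ)| ≤ dist a b ∧ dist a b ≤ (gq a : ℝ) + (gq b : ℝ) := by
    intro a ha b hb
    rcases hval a ha with ⟨hax, hga⟩ | ⟨hax, i, him, hgia, hga⟩ <;>
      rcases hval b hb with ⟨hbx, hgb⟩ | ⟨hbx, j, hjm, hgjb, hgb⟩
    · have hga' : ((gq a : ℚ) : ℝ) = (rq : ℝ) := by exact_mod_cast hga
      have hgb' : ((gq b : ℚ) : ℝ) = (rq : ℝ) := by exact_mod_cast hgb
      have hd : dist a b = 0 := by rw [hax, hbx, dist_self]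
      rw [hd, hga', hgb']
      constructor
      · simp
      · linarith
    · -- a = x, b = g j
      have hga' : ((gq a : ℚ) : ℝ) = (rq : ℝ) := by exact_mod_cast hga
      have hd : dist a b = dist x (g j) := by rw [hax, ← hgjb]
      have h1 := hL j hjm
      have h2 := hrU j hjm
      rw [abs_le] at h1
      rw [hd, hga', hgb]
      constructor
      · rw [abs_le]; constructor <;> linarith [h1.1, h1.2]
      · linarith [h1.1, h1.2]
    · -- a = g i, b = x
      have hgb' : ((gq b : ℚ) : ℝ) = (rq : ℝ) := by exact_mod_cast hgb
      have hd : dist a b = dist x (g i) := by rw [hbx, ← hgia, dist_comm]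
      have h1 := hL i him
      have h2 := hrU i him
      rw [abs_le] at h1
      rw [hd, hga, hgb']
      constructor
      · rw [abs_le]; constructor <;> linarith [h1.1, h1.2]
      · linarith [h1.1, h1.2]
    · -- a = g i, b = g j
      have hd : dist a b = dist (f i) (f j) := by
        rw [← hgia, ← hgjb, ← hiso i him j hjm]
      have h1 : |dist x (f i) - dist x (f j)| ≤ dist (f i) (f j) := by
        rw [dist_comm x (f i), dist_comm x (f j)]
        exact abs_dist_sub_le _ _ _
      have h2 : dist (f i) (f j) ≤ dist (f i) x + dist x (f j) := dist_triangle _ _ _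
      rw [hd, hga, hgb]
      rw [dist_comm (f i) x] at h2
      exact ⟨h1, h2⟩
  obtain ⟨w, hw⟩ := hext A gq hnn hpair
  have hxA : x ∈ A := Finset.mem_insert_self _ _
  have hwx : dist w x = (rq : ℝ) := by
    have := hw x hxA
    rwa [show gq x = rq by simp [hgq]] at this
  refine ⟨w, ?_, ?_⟩
  · rw [dist_comm, hwx]; exact hrk
  · intro i hi
    have hgA : g i ∈ A := Finset.mem_insert_of_mem
      (Finset.mem_image.mpr ⟨i, Finset.mem_range.mpr hi, rfl⟩)
    have hwi : dist w (g i) = (gq (g i) : ℝ) := hw _ hgA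
    rcases hval (g i) hgA with ⟨hgi, hga⟩ | ⟨_, j, hjm, hgj, hga⟩
    · rw [hwi, hga]
      exact (hxeq i hi hgi).symm
    · have hfij : f j = f i := by
        have : dist (f j) (f i) = dist (g j) (g i) := hiso j hjm i hi
        rw [hgj, dist_self] at this
        exact dist_eq_zero.mp this
      rw [hwi, hga, hfij]

section Machinery

variable {X : Type*} [MetricSpace X] (k : ℝ)

def Good (k : ℝ) (m : ℕ) (f g : ℕ → X) : Prop :=
  (∀ i < m, ∀ j < m, dist (f i) (f j) = dist (g i) (g j)) ∧
    ∀ i < m, dist (f i) (g i) ≤ k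

lemma Good.symm {k : ℝ} {m : ℕ} {f g : ℕ → X} (h : Good k m f g) : Good k m g f := by
  refine ⟨fun i hi j hj => (h.1 i hi j hj).symm, fun i hi => ?_⟩
  rw [dist_comm]; exact h.2 i hi

lemma step_fwd {X : Type*} [MetricSpace X]
    (hrat : ∀ x y : X, ∃ q : ℚ, dist x y = (q : ℝ))
    (hext : ∀ (A : Finset X) (g : X → ℚ),
      (∀ a ∈ A, 0 ≤ g a) →
      (∀ a ∈ A, ∀ b ∈ A,
        |(g a : ℝ) - (g b : ℝ)| ≤ dist a b ∧ dist a b ≤ (g a : ℝ) + (g b : ℝ)) →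
      ∃ z : X, ∀ a ∈ A, dist z a = (g a : ℝ))
    (k : ℝ) (hk : 0 ≤ k) (m : ℕ) (f g : ℕ → X) (hG : Good k m f g) (x : X) :
    ∃ f' g' : ℕ → X, Good k (m + 1) f' g' ∧
      (∀ i < m, f' i = f i ∧ g' i = g i) ∧ f' m = x := by
  obtain ⟨y, hy1, hy2⟩ := ext1 hrat hext k hk m f g hG.1 hG.2 x
  refine ⟨fun i => if i = m then x else f i, fun i => if i = m then y else g i, ⟨?_, ?_⟩,
    fun i hi => ⟨if_neg (by omega), if_neg (by omega)⟩, if_pos rfl⟩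
  · intro i hi j hj
    rcases Nat.lt_succ_iff_lt_or_eq.mp hi with hi' | rfl <;>
      rcases Nat.lt_succ_iff_lt_or_eq.mp hj with hj' | rfl
    · simp only [if_neg (Nat.ne_of_lt hi'), if_neg (Nat.ne_of_lt hj')]
      exact hG.1 i hi' j hj'
    · simp only [if_neg (Nat.ne_of_lt hi'), if_pos rfl, if_true]
      rw [dist_comm (f i) x, dist_comm (g i) y]
      exact hy2 i hi'
    · simp only [if_neg (Nat.ne_of_lt hj'), if_pos rfl, if_true]
      exact hy2 j hj'
    · simp
  · intro i hi
    rcases Nat.lt_succ_iff_lt_or_eq.mp hi with hi' | rfl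
    · simp only [if_neg (Nat.ne_of_lt hi')]
      exact hG.2 i hi'
    · simpa using hy1

lemma step_bwd {X : Type*} [MetricSpace X]
    (hrat : ∀ x y : X, ∃ q : ℚ, dist x y = (q : ℝ))
    (hext : ∀ (A : Finset X) (g : X → ℚ),
      (∀ a ∈ A, 0 ≤ g a) →
      (∀ a ∈ A, ∀ b ∈ A,
        |(g a : ℝ) - (g b : ℝ)| ≤ dist a b ∧ dist a b ≤ (g a : ℝ) + (g b : ℝ)) →
      ∃ z : X, ∀ a ∈ A, dist z a = (g a : ℝ))
    (k : ℝ) (hk : 0 ≤ k) (m : ℕ) (f g : ℕ → X) (hG : Good k m f g) (x : X) :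
    ∃ f' g' : ℕ → X, Good k (m + 1) f' g' ∧
      (∀ i < m, f' i = f i ∧ g' i = g i) ∧ g' m = x := by
  obtain ⟨g', f', hG', hagree, hx⟩ := step_fwd hrat hext k hk m g f hG.symm x
  exact ⟨f', g', hG'.symm, fun i hi => ⟨(hagree i hi).2, (hagree i hi).1⟩, hx⟩

lemma step2 {X : Type*} [MetricSpace X]
    (hrat : ∀ x y : X, ∃ q : ℚ, dist x y = (q : ℝ))
    (hext : ∀ (A : Finset X) (g : X → ℚ),
      (∀ a ∈ A, 0 ≤ g a) →
      (∀ a ∈ A, ∀ b ∈ A,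
        |(g a : ℝ) - (g b : ℝ)| ≤ dist a b ∧ dist a b ≤ (g a : ℝ) + (g b : ℝ)) →
      ∃ z : X, ∀ a ∈ A, dist z a = (g a : ℝ))
    (k : ℝ) (hk : 0 ≤ k) (m : ℕ) (f g : ℕ → X) (hG : Good k m f g) (x : X) :
    ∃ f' g' : ℕ → X, Good k (m + 2) f' g' ∧
      (∀ i < m, f' i = f i ∧ g' i = g i) ∧ f' m = x ∧ g' (m + 1) = x := by
  obtain ⟨f1, g1, hG1, hag1, hx1⟩ := step_fwd hrat hext k hk m f g hG x
  obtain ⟨f2, g2, hG2, hag2, hx2⟩ := step_bwd hrat hext k hk (m + 1) f1 g1 hG1 x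
  refine ⟨f2, g2, hG2, fun i hi => ?_, ?_, hx2⟩
  · obtain ⟨h1, h2⟩ := hag2 i (by omega)
    obtain ⟨h3, h4⟩ := hag1 i hi
    exact ⟨h1.trans h3, h2.trans h4⟩
  · exact ((hag2 m (by omega)).1).trans hx1

end Machinery

lemma build {X : Type*} [MetricSpace X] [Nonempty X] [Countable X]
    (hrat : ∀ x y : X, ∃ q : ℚ, dist x y = (q : ℝ))
    (hext : ∀ (A : Finset X) (g : X → ℚ),
      (∀ a ∈ A, 0 ≤ g a) →
      (∀ a ∈ A, ∀ b ∈ A,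
        |(g a : ℝ) - (g b : ℝ)| ≤ dist a b ∧ dist a b ≤ (g a : ℝ) + (g b : ℝ)) →
      ∃ z : X, ∀ a ∈ A, dist z a = (g a : ℝ))
    (k : ℝ) (hk : 0 ≤ k) (n : ℕ) (a b : Fin n → X)
    (hiso : ∀ i j : Fin n, dist (a i) (a j) = dist (b i) (b j))
    (hcl : ∀ i : Fin n, dist (a i) (b i) ≤ k) :
    ∃ u v : ℕ → X, (∀ i j, dist (u i) (u j) = dist (v i) (v j)) ∧
      (∀ i, dist (u i) (v i) ≤ k) ∧
      (∀ i : Fin n, u i = a i ∧ v i = b i) ∧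
      Function.Surjective u ∧ Function.Surjective v := by
  classical
  obtain ⟨e, he⟩ := exists_surjective_nat X
  -- initial state
  set f0 : ℕ → X := fun i => if h : i < n then a ⟨i, h⟩ else Classical.arbitrary X with hf0
  set g0 : ℕ → X := fun i => if h : i < n then b ⟨i, h⟩ else Classical.arbitrary X with hg0
  have hG0 : Good k n f0 g0 := by
    constructor
    · intro i hi j hj
      simp only [hf0, hg0, dif_pos hi, dif_pos hj]
      exact hiso ⟨i, hi⟩ ⟨j, hj⟩
    · intro i hi
      simp only [hf0, hg0, dif_pos hi]
      exact hcl ⟨i, hi⟩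
  -- step function on good states
  let St := {s : ℕ × (ℕ → X) × (ℕ → X) // Good k s.1 s.2.1 s.2.2}
  have hstep : ∀ (t : ℕ) (s : St), ∃ s' : St,
      s'.1.1 = s.1.1 + 2 ∧ (∀ i < s.1.1, s'.1.2.1 i = s.1.2.1 i ∧ s'.1.2.2 i = s.1.2.2 i) ∧
        s'.1.2.1 s.1.1 = e t ∧ s'.1.2.2 (s.1.1 + 1) = e t := by
    intro t s
    obtain ⟨f', g', hG', hag, h1, h2⟩ :=
      step2 hrat hext k hk s.1.1 s.1.2.1 s.1.2.2 s.2 (e t)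
    exact ⟨⟨(s.1.1 + 2, f', g'), hG'⟩, rfl, hag, h1, h2⟩
  choose step hstepm hstepag hstepf hstepg using hstep
  set S : ℕ → St := fun t => Nat.rec ⟨(n, f0, g0), hG0⟩ (fun t ih => step t ih) t with hS
  have hS0 : S 0 = ⟨(n, f0, g0), hG0⟩ := rfl
  have hSsucc : ∀ t, S (t + 1) = step t (S t) := fun t => rfl
  have hm : ∀ t, (S t).1.1 = n + 2 * t := by
    intro t
    induction t with
    | zero => simp [hS0]
    | succ t ih => rw [hSsucc, hstepm, ih]; ring
  have hmono : ∀ t t', t ≤ t' → ∀ i < (S t).1.1,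
      (S t').1.2.1 i = (S t).1.2.1 i ∧ (S t').1.2.2 i = (S t).1.2.2 i := by
    intro t t' ht'
    induction t', ht' using Nat.le_induction with
    | base => intro i hi; exact ⟨rfl, rfl⟩
    | succ t' ht' ih =>
      intro i hi
      have hlt : i < (S t').1.1 := by
        have h1 := hm t; have h2 := hm t'; omega
      have h1 := hstepag t' (S t') i hlt
      have h2 := ih i hi
      have h3 : S (t' + 1) = step t' (S t') := hSsucc t'
      rw [h3]
      exact ⟨h1.1.trans h2.1, h1.2.trans h2.2⟩
  -- the sequences
  set u : ℕ → X := fun i => (S (i + 1)).1.2.1 i with hu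
  set v : ℕ → X := fun i => (S (i + 1)).1.2.2 i with hv
  have hilt : ∀ i : ℕ, i < (S (i + 1)).1.1 := by
    intro i; have := hm (i + 1); omega
  have hukey : ∀ t, ∀ i < (S t).1.1, u i = (S t).1.2.1 i ∧ v i = (S t).1.2.2 i := by
    intro t i hi
    rcases le_total t (i + 1) with h | h
    · have h1 := hmono t (i + 1) h i hi
      exact ⟨h1.1, h1.2⟩
    · have h1 := hmono (i + 1) t h i (hilt i)
      exact ⟨h1.1.symm, h1.2.symm⟩
  refine ⟨u, v, ?_, ?_, ?_, ?_, ?_⟩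
  · intro i j
    have hiT : i < (S (max i j + 1)).1.1 := by have := hm (max i j + 1); omega
    have hjT : j < (S (max i j + 1)).1.1 := by have := hm (max i j + 1); omega
    obtain ⟨hui, hvi⟩ := hukey (max i j + 1) i hiT
    obtain ⟨huj, hvj⟩ := hukey (max i j + 1) j hjT
    rw [hui, huj, hvi, hvj]
    exact (S (max i j + 1)).2.1 i hiT j hjT
  · intro i
    exact (S (i + 1)).2.2 i (hilt i)
  · intro i
    have hi0 : (i : ℕ) < (S 0).1.1 := by rw [hS0]; exact i.2
    obtain ⟨h1, h2⟩ := hukey 0 i hi0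
    rw [hS0] at h1 h2
    constructor
    · rw [h1]; simp only [hf0]; rw [dif_pos i.2]
    · rw [h2]; simp only [hg0]; rw [dif_pos i.2]
  · intro x
    obtain ⟨t, ht⟩ := he x
    refine ⟨(S t).1.1, ?_⟩
    have hlt : (S t).1.1 < (S (t + 1)).1.1 := by
      have h1 := hm t; have h2 := hm (t + 1); omega
    rw [(hukey (t + 1) (S t).1.1 hlt).1, hSsucc, hstepf, ht]
  · intro x
    obtain ⟨t, ht⟩ := he x
    refine ⟨(S t).1.1 + 1, ?_⟩
    have hlt : (S t).1.1 + 1 < (S (t + 1)).1.1 := by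
      have h1 := hm t; have h2 := hm (t + 1); omega
    rw [(hukey (t + 1) ((S t).1.1 + 1) hlt).2, hSsucc, hstepg, ht]

theorem stmt_2 (X : Type*) [MetricSpace X] (hX : IsRationalUrysohn X)
    (k : ℝ) (hk : 0 ≤ k) (n : ℕ) (a b : Fin n → X)
    (hiso : ∀ i j : Fin n, dist (a i) (a j) = dist (b i) (b j))
    (hcl : ∀ i : Fin n, dist (a i) (b i) ≤ k) :
    ∃ g : X ≃ᵢ X, (∀ i : Fin n, g (a i) = b i) ∧ ∀ x : X, dist x (g x) ≤ k := by
  obtain ⟨hne, hcnt, hrat, hext⟩ := hX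
  haveI := hne
  haveI := hcnt
  obtain ⟨u, v, huv, hbdd, hinit, husurj, hvsurj⟩ :=
    build hrat hext k hk n a b hiso hcl
  choose fidx hfidx using husurj
  choose gidx hgidx using hvsurj
  have hgf : ∀ z w : ℕ, v w = v z → u w = u z := by
    intro z w h
    have : dist (u w) (u z) = 0 := by rw [huv, h, dist_self]
    exact dist_eq_zero.mp this
  have hfg : ∀ z w : ℕ, u w = u z → v w = v z := by
    intro z w h
    have : dist (v w) (v z) = 0 := by rw [← huv, h, dist_self]
    exact dist_eq_zero.mp this
  set F : X → X := fun x => v (fidx x) with hF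
  set G : X → X := fun x => u (gidx x) with hG
  have hleft : ∀ x, G (F x) = x := by
    intro x
    have h1 : v (gidx (v (fidx x))) = v (fidx x) := hgidx _
    have h2 : u (gidx (v (fidx x))) = u (fidx x) := hgf _ _ h1
    simp only [hF, hG]
    rw [h2, hfidx]
  have hright : ∀ x, F (G x) = x := by
    intro x
    have h1 : u (fidx (u (gidx x))) = u (gidx x) := hfidx _
    have h2 : v (fidx (u (gidx x))) = v (gidx x) := hfg _ _ h1
    simp only [hF, hG]
    rw [h2, hgidx]
  have hdist : ∀ x y : X, dist (F x) (F y) = dist x y := by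
    intro x y
    simp only [hF]
    rw [← huv, hfidx, hfidx]
  refine ⟨⟨⟨F, G, hleft, hright⟩, Isometry.of_dist_eq hdist⟩, ?_, ?_⟩
  · intro i
    have h1 : u (i : ℕ) = a i := (hinit i).1
    have h2 : v (i : ℕ) = b i := (hinit i).2
    have h3 : u (fidx (a i)) = u (i : ℕ) := by rw [hfidx, h1]
    have h4 : v (fidx (a i)) = v (i : ℕ) := hfg _ _ h3
    show F (a i) = b i
    simp only [hF]
    rw [h4, h2]
  · intro x
    show dist x (F x) ≤ k
    simp only [hF]
    calc dist x (v (fidx x)) = dist (u (fidx x)) (v (fidx x)) := by rw [hfidx]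
      _ ≤ k := hbdd _
end

section
/- Let X be a Urysohn space. Then there exists an isometric bijection g : X → X such that for every point x ∈ X the orbit {gⁿ(x) : n ∈ ℤ} is dense in X. -/
def IsUrysohn (X : Type*) [MetricSpace X] : Prop :=
  Nonempty X ∧ CompleteSpace X ∧ TopologicalSpace.SeparableSpace X ∧
    (∀ (A : Finset X) (g : X → ℝ),
      (∀ a ∈ A, 0 ≤ g a) →
      (∀ a ∈ A, ∀ b ∈ A, |g a - g b| ≤ dist a b ∧ dist a b ≤ g a + g b) →
      ∃ z : X, ∀ a ∈ A, dist z a = g a)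


namespace U3

/-- Subadditive extension of a profile `φ` defined on `[0,N]`. -/
noncomputable def F0 (φ : ℕ → ℝ) (N : ℕ) : ℕ → ℝ
  | n =>
    if hn : n ≤ N then φ n
    else if hne : (Finset.Icc 1 N).Nonempty then
      (Finset.Icc 1 N).attach.inf' (by simpa using hne)
        (fun k => φ k.1 + F0 φ N (n - k.1))
    else 0
  termination_by n => n
  decreasing_by
    have hk := k.2
    simp only [Finset.mem_Icc] at hk
    omega

variable {φ : ℕ → ℝ} {N : ℕ}

lemma F0_small (hn : n ≤ N) : F0 φ N n = φ n := by
  rw [F0]; simp [hn]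

lemma F0_big (hN : 1 ≤ N) (hn : N < n) :
    F0 φ N n = (Finset.Icc 1 N).attach.inf'
      (by simp [Finset.nonempty_Icc]; omega)
      (fun k => φ k.1 + F0 φ N (n - k.1)) := by
  have hne : (Finset.Icc 1 N).Nonempty := by simp [Finset.nonempty_Icc]; omega
  rw [F0, dif_neg (by omega), dif_pos hne]

lemma F0_le_step (hn : N < n) (hk1 : 1 ≤ k) (hkN : k ≤ N) :
    F0 φ N n ≤ φ k + F0 φ N (n - k) := by
  have hN : 1 ≤ N := le_trans hk1 hkN
  rw [F0_big hN hn]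
  exact Finset.inf'_le _ (Finset.mem_attach _ ⟨k, by simp [Finset.mem_Icc]; omega⟩)

lemma F0_exists_step (hN : 1 ≤ N) (hn : N < n) :
    ∃ k, 1 ≤ k ∧ k ≤ N ∧ F0 φ N n = φ k + F0 φ N (n - k) := by
  rw [F0_big hN hn]
  obtain ⟨⟨k, hk⟩, -, h⟩ := Finset.exists_mem_eq_inf'
    (s := (Finset.Icc 1 N).attach)
    (by simp [Finset.nonempty_Icc]; omega) (fun k => φ k.1 + F0 φ N (n - k.1))
  simp only [Finset.mem_Icc] at hk
  exact ⟨k, hk.1, hk.2, h⟩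

end U3

namespace U3x
open U3

variable {φ : ℕ → ℝ} {N : ℕ} {c K : ℝ}

section
variable (hN : 1 ≤ N) (hφ0 : φ 0 = 0)
variable (hsub : ∀ a b, a + b ≤ N → φ (a + b) ≤ φ a + φ b)
variable (hrev : ∀ a b, a + b ≤ N → φ a ≤ φ (a + b) + φ b)
variable (hc : 0 < c) (hcφ : ∀ k, k ≤ N → c * k ≤ φ k)
variable (hK : ∀ k, k ≤ N → φ k ≤ K)

include hN hc hcφ in
lemma F0_lb : ∀ n, c * n ≤ F0 φ N n := by
  intro n
  induction n using Nat.strong_induction_on with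
  | _ n ih =>
    by_cases hn : n ≤ N
    · rw [F0_small hn]; exact hcφ n hn
    · obtain ⟨k, hk1, hkN, heq⟩ := F0_exists_step hN (show N < n by omega)
      rw [heq]
      have h1 := ih (n - k) (by omega)
      have h2 := hcφ k hkN
      have : ((n : ℝ)) = (k : ℝ) + ((n - k : ℕ) : ℝ) := by
        push_cast [Nat.cast_sub (by omega : k ≤ n)]; ring
      rw [this]; nlinarith

include hN hc hcφ in
lemma F0_nonneg : ∀ n, 0 ≤ F0 φ N n := by
  intro n
  have := F0_lb hN hc hcφ n
  nlinarith [Nat.cast_nonneg (α := ℝ) n]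

include hN hc hcφ hK in
lemma F0_ub (k0 : ℕ) (hk01 : 1 ≤ k0) (hk0N : k0 ≤ N) (hk0 : φ k0 = c * k0) :
    ∀ n, F0 φ N n ≤ c * n + K := by
  have hK0 : 0 ≤ K := le_trans (by simpa using hcφ 0 (by omega)) (hK 0 (by omega))
  intro n
  induction n using Nat.strong_induction_on with
  | _ n ih =>
    by_cases hn : n ≤ N
    · rw [F0_small hn]
      have := hK n hn
      have : (0:ℝ) ≤ c * n := by positivity
      linarith [hK n hn]
    · have hstep := F0_le_step (φ := φ) (by omega : N < n) hk01 hk0N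
      have h1 := ih (n - k0) (by omega)
      have : ((n : ℝ)) = (k0 : ℝ) + ((n - k0 : ℕ) : ℝ) := by
        push_cast [Nat.cast_sub (by omega : k0 ≤ n)]; ring
      rw [this]
      rw [hk0] at hstep
      nlinarith

include hN hφ0 hsub in
lemma F0_add : ∀ a b, F0 φ N (a + b) ≤ F0 φ N a + F0 φ N b := by
  intro a b
  induction b using Nat.strong_induction_on generalizing a with
  | _ b ih =>
    rcases Nat.eq_zero_or_pos b with hb | hb
    · subst hb
      simp [F0_small (Nat.zero_le N), hφ0]
    · by_cases hab : a + b ≤ N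
      · rw [F0_small hab, F0_small (show a ≤ N by omega), F0_small (show b ≤ N by omega)]
        exact hsub a b hab
      · by_cases hbN : b ≤ N
        · have h1 := F0_le_step (φ := φ) (by omega : N < a + b) hb hbN
          rw [show a + b - b = a by omega] at h1
          rw [F0_small hbN]
          linarith
        · obtain ⟨k, hk1, hkN, heq⟩ := F0_exists_step hN (show N < b by omega)
          have h1 := F0_le_step (φ := φ) (by omega : N < a + b) hk1 hkN
          have h2 := ih (b - k) (by omega) a
          rw [show a + b - k = a + (b - k) by omega] at h1
          rw [heq]; linarith

include hN hφ0 hsub hrev in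
lemma F0_E1 : ∀ n k, k ≤ N → k ≤ n → F0 φ N (n - k) ≤ F0 φ N n + φ k := by
  intro n
  induction n using Nat.strong_induction_on with
  | _ n ih =>
    intro k hkN hkn
    by_cases hn : n ≤ N
    · rw [F0_small (show n - k ≤ N by omega), F0_small hn]
      have := hrev (n - k) k (by omega)
      rw [show n - k + k = n by omega] at this
      exact this
    · obtain ⟨k', hk'1, hk'N, heq⟩ := F0_exists_step hN (show N < n by omega)
      by_cases hkk : k ≤ k'
      · have h1 : F0 φ N (n - k) ≤ F0 φ N (n - k') + F0 φ N (k' - k) := by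
          have := F0_add hN hφ0 hsub (n - k') (k' - k)
          rw [show n - k' + (k' - k) = n - k by omega] at this
          exact this
        have h2 : F0 φ N (k' - k) = φ (k' - k) := F0_small (by omega)
        have h3 := hrev (k' - k) k (by omega)
        rw [show k' - k + k = k' by omega] at h3
        rw [heq]; linarith
      · have h1 := ih (n - k') (by omega) (k - k') (by omega) (by omega)
        rw [show n - k' - (k - k') = n - k by omega] at h1
        have h3 := hrev (k - k') k' (by omega)
        rw [show k - k' + k' = k by omega] at h3
        rw [heq]; linarith

include hN hφ0 hsub hrev in
lemma F0_rev : ∀ a b, F0 φ N a ≤ F0 φ N (a + b) + F0 φ N b := by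
  intro a b
  induction b using Nat.strong_induction_on generalizing a with
  | _ b ih =>
    rcases Nat.eq_zero_or_pos b with hb | hb
    · subst hb; simp [F0_small (Nat.zero_le N), hφ0]
    · by_cases hbN : b ≤ N
      · have := F0_E1 hN hφ0 hsub hrev (a + b) b hbN (by omega)
        rw [show a + b - b = a by omega] at this
        rw [F0_small hbN]; exact this
      · obtain ⟨k, hk1, hkN, heq⟩ := F0_exists_step hN (show N < b by omega)
        have h1 := ih (b - k) (by omega) a
        have h2 := F0_E1 hN hφ0 hsub hrev (a + b) k hkN (by omega)
        rw [show a + b - k = a + (b - k) by omega] at h2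
        rw [heq]; linarith

include hN hφ0 hsub hrev hc hcφ in
lemma F0_sub_le : ∀ a b : ℕ, F0 φ N (a - b) ≤ F0 φ N a + F0 φ N b := by
  intro a b
  by_cases hba : b ≤ a
  · have := F0_rev hN hφ0 hsub hrev (a - b) b
    rw [show a - b + b = a by omega] at this
    exact this
  · rw [show a - b = 0 by omega]
    rw [F0_small (Nat.zero_le N), hφ0]
    have := F0_nonneg hN hc hcφ a
    have := F0_nonneg hN hc hcφ b
    linarith

end
end U3x

namespace U3

noncomputable def F0i (φ : ℕ → ℝ) (N : ℕ) (z : ℤ) : ℝ := F0 φ N z.natAbs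

variable {φ : ℕ → ℝ} {N : ℕ} {c K : ℝ}

section
variable (hN : 1 ≤ N) (hφ0 : φ 0 = 0)
variable (hsub : ∀ a b, a + b ≤ N → φ (a + b) ≤ φ a + φ b)
variable (hrev : ∀ a b, a + b ≤ N → φ a ≤ φ (a + b) + φ b)
variable (hc : 0 < c) (hcφ : ∀ k, k ≤ N → c * k ≤ φ k)
variable (hK : ∀ k, k ≤ N → φ k ≤ K)

lemma F0i_natCast (n : ℕ) : F0i φ N (n : ℤ) = F0 φ N n := by
  simp [F0i]

lemma F0i_neg (z : ℤ) : F0i φ N (-z) = F0i φ N z := by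
  simp [F0i]

include hN hφ0 hsub hrev hc hcφ in
lemma F0i_add (u v : ℤ) : F0i φ N (u + v) ≤ F0i φ N u + F0i φ N v := by
  have tri : (u+v).natAbs = u.natAbs + v.natAbs ∨ (u+v).natAbs = u.natAbs - v.natAbs
      ∨ (u+v).natAbs = v.natAbs - u.natAbs := by omega
  unfold F0i
  rcases tri with ht | ht | ht <;> rw [ht]
  · exact U3x.F0_add hN hφ0 hsub u.natAbs v.natAbs
  · exact U3x.F0_sub_le hN hφ0 hsub hrev hc hcφ _ _
  · have := U3x.F0_sub_le hN hφ0 hsub hrev hc hcφ v.natAbs u.natAbs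
    linarith

include hN hc hcφ in
lemma le_F0i (z : ℤ) : c * ((z : ℤ) : ℝ) ≤ F0i φ N z := by
  have h1 : ((z:ℝ)) ≤ ((z.natAbs : ℕ) : ℝ) := by
    rw [Nat.cast_natAbs (α := ℝ)]
    exact_mod_cast le_abs_self z
  have h2 := U3x.F0_lb hN hc hcφ z.natAbs
  have := mul_le_mul_of_nonneg_left h1 (le_of_lt hc)
  exact le_trans this h2

include hN hc hcφ hK in
lemma F0i_ub (k0 : ℕ) (hk01 : 1 ≤ k0) (hk0N : k0 ≤ N) (hk0 : φ k0 = c * k0)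
    (z : ℤ) (hz : 0 ≤ z) : F0i φ N z ≤ c * ((z:ℤ):ℝ) + K := by
  have h2 := U3x.F0_ub hN hc hcφ hK k0 hk01 hk0N hk0 z.natAbs
  have h3 : ((z.natAbs : ℕ) : ℝ) = ((z : ℤ) : ℝ) := by
    rw [Nat.cast_natAbs (α := ℝ)]
    exact_mod_cast abs_of_nonneg hz
  calc F0i φ N z = F0 φ N z.natAbs := rfl
  _ ≤ c * ((z.natAbs : ℕ) : ℝ) + K := h2
  _ = c * ((z:ℤ):ℝ) + K := by rw [h3]

include hN hc hcφ in
lemma F0i_nonneg (z : ℤ) : 0 ≤ F0i φ N z := U3x.F0_nonneg hN hc hcφ z.natAbs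

end
end U3

namespace U3

section Psi

variable (φ h : ℕ → ℝ) (N M : ℕ)

noncomputable def psi (n : ℕ) : ℝ :=
  min (F0 φ N n) (min
    ((Finset.range (N+1)).inf' ⟨0, Finset.mem_range.mpr (Nat.succ_pos N)⟩
      (fun i => h i + F0i φ N ((M:ℤ) - i - n)))
    (((Finset.range (N+1)) ×ˢ (Finset.range (N+1))).inf'
      (Finset.Nonempty.product ⟨0, Finset.mem_range.mpr (Nat.succ_pos N)⟩
        ⟨0, Finset.mem_range.mpr (Nat.succ_pos N)⟩)
      (fun p => h p.1 + h p.2 + F0i φ N (2*(M:ℤ) - p.1 - p.2 - n))))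

variable {φ h N M}

lemma psi_le_F0 (n : ℕ) : psi φ h N M n ≤ F0 φ N n := min_le_left _ _

lemma psi_le_A1 {i : ℕ} (hi : i ≤ N) (n : ℕ) :
    psi φ h N M n ≤ h i + F0i φ N ((M:ℤ) - i - n) := by
  refine le_trans (min_le_right _ _) (le_trans (min_le_left _ _) ?_)
  exact Finset.inf'_le _ (Finset.mem_range.mpr (by omega))

lemma psi_le_A2 {i j : ℕ} (hi : i ≤ N) (hj : j ≤ N) (n : ℕ) :
    psi φ h N M n ≤ h i + h j + F0i φ N (2*(M:ℤ) - i - j - n) := by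
  refine le_trans (min_le_right _ _) (le_trans (min_le_right _ _) ?_)
  exact Finset.inf'_le (b := (i, j)) _ (Finset.mem_product.mpr
    ⟨Finset.mem_range.mpr (by omega), Finset.mem_range.mpr (by omega)⟩)

lemma psi_cases (n : ℕ) :
    psi φ h N M n = F0 φ N n ∨
    (∃ i, i ≤ N ∧ psi φ h N M n = h i + F0i φ N ((M:ℤ) - i - n)) ∨
    (∃ i j, i ≤ N ∧ j ≤ N ∧
      psi φ h N M n = h i + h j + F0i φ N (2*(M:ℤ) - i - j - n)) := by
  have hne1 : (Finset.range (N+1)).Nonempty := ⟨0, Finset.mem_range.mpr (Nat.succ_pos N)⟩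
  have hne2 : ((Finset.range (N+1)) ×ˢ (Finset.range (N+1))).Nonempty :=
    Finset.Nonempty.product hne1 hne1
  set A1 : ℝ := (Finset.range (N+1)).inf' hne1
      (fun i => h i + F0i φ N ((M:ℤ) - i - n)) with hA1
  set A2 : ℝ := ((Finset.range (N+1)) ×ˢ (Finset.range (N+1))).inf' hne2
      (fun p => h p.1 + h p.2 + F0i φ N (2*(M:ℤ) - p.1 - p.2 - n)) with hA2
  have hps : psi φ h N M n = min (F0 φ N n) (min A1 A2) := rfl
  rcases min_cases (F0 φ N n) (min A1 A2) with ⟨h1, -⟩ | ⟨h1, -⟩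
  · exact Or.inl (hps.trans h1)
  · rw [h1] at hps
    rcases min_cases A1 A2 with ⟨h2, -⟩ | ⟨h2, -⟩
    · rw [h2] at hps
      obtain ⟨i, hi, hieq⟩ := Finset.exists_mem_eq_inf' hne1
        (fun i => h i + F0i φ N ((M:ℤ) - i - n))
      exact Or.inr (Or.inl ⟨i, by simp only [Finset.mem_range, Nat.lt_succ_iff] at hi; exact hi, by rw [hps, hA1, hieq]⟩)
    · rw [h2] at hps
      obtain ⟨p, hp, hpeq⟩ := Finset.exists_mem_eq_inf' hne2
        (fun p => h p.1 + h p.2 + F0i φ N (2*(M:ℤ) - p.1 - p.2 - n))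
      rw [Finset.mem_product] at hp
      refine Or.inr (Or.inr ⟨p.1, p.2, Nat.lt_succ_iff.mp (Finset.mem_range.mp hp.1),
        Nat.lt_succ_iff.mp (Finset.mem_range.mp hp.2), ?_⟩)
      rw [hps, hA2, hpeq]

section PsiLemmas

variable {c K H : ℝ}
variable (hN : 1 ≤ N) (hφ0 : φ 0 = 0)
variable (hsub : ∀ a b, a + b ≤ N → φ (a + b) ≤ φ a + φ b)
variable (hrev : ∀ a b, a + b ≤ N → φ a ≤ φ (a + b) + φ b)
variable (hc : 0 < c) (hcφ : ∀ k, k ≤ N → c * k ≤ φ k)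
variable (k0 : ℕ) (hk01 : 1 ≤ k0) (hk0N : k0 ≤ N) (hk0 : φ k0 = c * k0)
variable (hK : ∀ k, k ≤ N → φ k ≤ K)
variable (hh : ∀ i, i ≤ N → 0 < h i) (hH : ∀ i, i ≤ N → h i ≤ H)
variable (hcomp1 : ∀ i j, i ≤ j → j ≤ N → h j ≤ h i + φ (j - i))
variable (hcomp1' : ∀ i j, i ≤ j → j ≤ N → h i ≤ h j + φ (j - i))
variable (hcomp2 : ∀ i j, i ≤ j → j ≤ N → φ (j - i) ≤ h i + h j)
variable (hM : c * (4*N) + 3*K + 3*H + 3 ≤ c * M)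

include hc hcφ hk01 hk0N hk0 hK in
lemma hK0 : 0 < K := by
  have h1 := hcφ k0 hk0N
  have h2 := hK k0 hk0N
  have : (0:ℝ) < (k0 : ℝ) := by exact_mod_cast hk01
  nlinarith

include hN hh hH in
lemma hH0 : 0 < H := lt_of_lt_of_le (hh 0 (by omega)) (hH 0 (by omega))

include hN hc hcφ hk01 hk0N hk0 hK hh hH hM in
lemma hMN : 4 * N ≤ M := by
  have hK0' := hK0 hc hcφ k0 hk01 hk0N hk0 hK
  have hH0' := hH0 hN hh hH
  have : c * (4*N) < c * M := by linarith
  have : (4 * N : ℝ) < M := by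
    have := (mul_lt_mul_iff_right₀ hc).mp this
    exact this
  exact_mod_cast le_of_lt (by exact_mod_cast this : ((4*N : ℕ):ℝ) < ((M:ℕ):ℝ))

include hN hc hcφ hh in
lemma psi_nonneg (n : ℕ) : 0 ≤ psi φ h N M n := by
  unfold psi
  refine le_min (U3x.F0_nonneg hN hc hcφ n) (le_min ?_ ?_)
  · refine Finset.le_inf' _ _ (fun i hi => ?_)
    rw [Finset.mem_range] at hi
    have := hh i (by omega)
    have := F0i_nonneg hN hc hcφ (z := (M:ℤ) - i - n)
    linarith
  · refine Finset.le_inf' _ _ (fun p hp => ?_)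
    rw [Finset.mem_product, Finset.mem_range, Finset.mem_range] at hp
    have := hh p.1 (by omega)
    have := hh p.2 (by omega)
    have := F0i_nonneg hN hc hcφ (z := 2*(M:ℤ) - p.1 - p.2 - n)
    linarith

include hN hφ0 hc hcφ hh in
lemma psi_zero : psi φ h N M 0 = 0 := by
  refine le_antisymm ?_ (psi_nonneg hN hc hcφ hh 0)
  calc psi φ h N M 0 ≤ F0 φ N 0 := psi_le_F0 0
  _ = 0 := by rw [F0_small (Nat.zero_le N), hφ0]

include hN hc hcφ hh in
lemma psi_pos (n : ℕ) (hn : 1 ≤ n) : 0 < psi φ h N M n := by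
  unfold psi
  refine lt_min ?_ (lt_min ?_ ?_)
  · have := U3x.F0_lb hN hc hcφ n
    have : (0:ℝ) < c * n := by
      have : (0:ℝ) < (n:ℝ) := by exact_mod_cast hn
      positivity
    linarith [U3x.F0_lb hN hc hcφ n]
  · refine (Finset.lt_inf'_iff _).2 ?_
    intro i hi
    rw [Finset.mem_range] at hi
    have := hh i (by omega)
    have := F0i_nonneg hN hc hcφ (z := (M:ℤ) - i - n)
    linarith
  · refine (Finset.lt_inf'_iff _).2 ?_
    intro p hp
    rw [Finset.mem_product, Finset.mem_range, Finset.mem_range] at hp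
    have := hh p.1 (by omega)
    have := hh p.2 (by omega)
    have := F0i_nonneg hN hc hcφ (z := 2*(M:ℤ) - p.1 - p.2 - n)
    linarith

include hN hc hcφ hk01 hk0N hk0 hK hh hH hM in
lemma psi_pin1 (k : ℕ) (hk : k ≤ N) : psi φ h N M k = φ k := by
  have hK0' := hK0 hc hcφ k0 hk01 hk0N hk0 hK
  have hH0' := hH0 hN hh hH
  have hNr : (0:ℝ) ≤ c * N := by positivity
  refine le_antisymm (by rw [← F0_small (φ := φ) hk]; exact psi_le_F0 k) ?_
  unfold psi
  refine le_min (le_of_eq (F0_small hk).symm) (le_min ?_ ?_)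
  · refine Finset.le_inf' _ _ (fun i hi => ?_)
    rw [Finset.mem_range] at hi
    have hi' : i ≤ N := by omega
    have hhi := hh i hi'
    have L := le_F0i hN hc hcφ (z := (M:ℤ) - i - k)
    push_cast at L
    have hik : (i:ℝ) ≤ N := by exact_mod_cast hi'
    have hkk : (k:ℝ) ≤ N := by exact_mod_cast hk
    have hKk := hK k hk
    have p1 : c * (i:ℝ) ≤ c * N := mul_le_mul_of_nonneg_left hik hc.le
    have p2 : c * (k:ℝ) ≤ c * N := mul_le_mul_of_nonneg_left hkk hc.le
    have hH0'' : (0:ℝ) < H := hH0 hN hh hH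
    have hK0'' : (0:ℝ) < K := hK0 hc hcφ k0 hk01 hk0N hk0 hK
    linarith
  · refine Finset.le_inf' _ _ (fun p hp => ?_)
    rw [Finset.mem_product, Finset.mem_range, Finset.mem_range] at hp
    have h1 := hh p.1 (by omega)
    have h2 := hh p.2 (by omega)
    have L := le_F0i hN hc hcφ (z := 2*(M:ℤ) - p.1 - p.2 - k)
    push_cast at L
    have hik : ((p.1:ℕ):ℝ) ≤ N := by exact_mod_cast Nat.lt_succ_iff.mp hp.1
    have hjk : ((p.2:ℕ):ℝ) ≤ N := by exact_mod_cast Nat.lt_succ_iff.mp hp.2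
    have hkk : (k:ℝ) ≤ N := by exact_mod_cast hk
    have hKk := hK k hk
    have p1 : c * ((p.1:ℕ):ℝ) ≤ c * N := mul_le_mul_of_nonneg_left hik hc.le
    have p2 : c * ((p.2:ℕ):ℝ) ≤ c * N := mul_le_mul_of_nonneg_left hjk hc.le
    have p3 : c * (k:ℝ) ≤ c * N := mul_le_mul_of_nonneg_left hkk hc.le
    have hH0'' : (0:ℝ) < H := hH0 hN hh hH
    have hK0'' : (0:ℝ) < K := hK0 hc hcφ k0 hk01 hk0N hk0 hK
    linarith

include hN hφ0 hc hcφ hk01 hk0N hk0 hK hh hH hcomp1 hcomp1' hM in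
lemma psi_pin2 (i : ℕ) (hi : i ≤ N) : psi φ h N M (M - i) = h i := by
  have hK0' := hK0 hc hcφ k0 hk01 hk0N hk0 hK
  have hH0' := hH0 hN hh hH
  have hMN' := hMN hN hc hcφ k0 hk01 hk0N hk0 hK hh hH hM
  have hNr : (0:ℝ) ≤ c * N := by positivity
  have hiM : i ≤ M := by omega
  have hcast : (((M - i : ℕ)) : ℤ) = (M:ℤ) - i := by omega
  refine le_antisymm ?_ ?_
  · have := psi_le_A1 (φ := φ) (h := h) (M := M) hi (M - i)
    rw [hcast] at this
    simp only [show (M:ℤ) - i - ((M:ℤ) - i) = 0 by ring] at this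
    calc psi φ h N M (M - i) ≤ h i + F0i φ N 0 := this
    _ = h i := by
        rw [show F0i φ N 0 = φ 0 from by simp [F0i, F0_small (Nat.zero_le N)], hφ0]
        ring
  · unfold psi
    refine le_min ?_ (le_min ?_ ?_)
    · have L := U3x.F0_lb hN hc hcφ (M - i)
      have : ((M - i : ℕ) : ℝ) = (M:ℝ) - i := by
        push_cast [Nat.cast_sub hiM]; ring
      rw [this] at L
      have hir : (i:ℝ) ≤ N := by exact_mod_cast hi
      have hHi := hH i hi
      have p1 : c * (i:ℝ) ≤ c * N := mul_le_mul_of_nonneg_left hir hc.le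
      have hNr2 : (0:ℝ) ≤ c * N := hNr
      linarith
    · refine Finset.le_inf' _ _ (fun j hj => ?_)
      rw [Finset.mem_range] at hj
      have hj' : j ≤ N := by omega
      have : (M:ℤ) - j - ((M - i : ℕ) : ℤ) = (i:ℤ) - j := by omega
      rw [this]
      rcases le_total i j with hij | hij
      · have : ((i:ℤ) - j).natAbs = j - i := by omega
        rw [F0i, this, F0_small (show j - i ≤ N by omega)]
        exact hcomp1' i j hij hj'
      · have : ((i:ℤ) - j).natAbs = i - j := by omega
        rw [F0i, this, F0_small (show i - j ≤ N by omega)]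
        exact hcomp1 j i hij hi
    · refine Finset.le_inf' _ _ (fun p hp => ?_)
      rw [Finset.mem_product, Finset.mem_range, Finset.mem_range] at hp
      have h1 := hh p.1 (by omega)
      have h2 := hh p.2 (by omega)
      rw [show 2*(M:ℤ) - p.1 - p.2 - ((M - i : ℕ) : ℤ) = 2*(M:ℤ) - p.1 - p.2 - ((M:ℤ) - i)
        from by omega]
      have L := le_F0i hN hc hcφ (z := 2*(M:ℤ) - p.1 - p.2 - ((M:ℤ) - i))
      have Lc : (((2*(M:ℤ) - p.1 - p.2 - ((M:ℤ) - i)) : ℤ) : ℝ)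
          = 2*(M:ℝ) - p.1 - p.2 - ((M:ℝ) - i) := by push_cast; ring
      rw [Lc] at L
      have hik : ((p.1:ℕ):ℝ) ≤ N := by exact_mod_cast Nat.lt_succ_iff.mp hp.1
      have hjk : ((p.2:ℕ):ℝ) ≤ N := by exact_mod_cast Nat.lt_succ_iff.mp hp.2
      have hir : (i:ℝ) ≤ N := by exact_mod_cast hi
      have hir0 : (0:ℝ) ≤ (i:ℝ) := by positivity
      have hHi := hH i hi
      have p1 : c * ((p.1:ℕ):ℝ) ≤ c * N := mul_le_mul_of_nonneg_left hik hc.le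
      have p2 : c * ((p.2:ℕ):ℝ) ≤ c * N := mul_le_mul_of_nonneg_left hjk hc.le
      have p3 : (0:ℝ) ≤ c * (i:ℝ) := by positivity
      linarith

end PsiLemmas
end Psi
end U3

namespace U3
section Psi2
variable {φ h : ℕ → ℝ} {N M : ℕ} {c K H : ℝ}
variable (hN : 1 ≤ N) (hφ0 : φ 0 = 0)
variable (hsub : ∀ a b, a + b ≤ N → φ (a + b) ≤ φ a + φ b)
variable (hrev : ∀ a b, a + b ≤ N → φ a ≤ φ (a + b) + φ b)
variable (hc : 0 < c) (hcφ : ∀ k, k ≤ N → c * k ≤ φ k)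
variable (k0 : ℕ) (hk01 : 1 ≤ k0) (hk0N : k0 ≤ N) (hk0 : φ k0 = c * k0)
variable (hK : ∀ k, k ≤ N → φ k ≤ K)
variable (hh : ∀ i, i ≤ N → 0 < h i) (hH : ∀ i, i ≤ N → h i ≤ H)
variable (hcomp1 : ∀ i j, i ≤ j → j ≤ N → h j ≤ h i + φ (j - i))
variable (hcomp1' : ∀ i j, i ≤ j → j ≤ N → h i ≤ h j + φ (j - i))
variable (hcomp2 : ∀ i j, i ≤ j → j ≤ N → φ (j - i) ≤ h i + h j)
variable (hM : c * (4*N) + 3*K + 3*H + 3 ≤ c * M)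

include hN hcomp2 in
lemma F0i_compat {i j : ℕ} (hi : i ≤ N) (hj : j ≤ N) :
    F0i φ N ((j:ℤ) - i) ≤ h i + h j := by
  rcases le_total i j with hij | hij
  · have hn : ((j:ℤ) - i).natAbs = j - i := by omega
    rw [F0i, hn, F0_small (show j - i ≤ N by omega)]
    exact hcomp2 i j hij hj
  · have hn : ((j:ℤ) - i).natAbs = i - j := by omega
    rw [F0i, hn, F0_small (show i - j ≤ N by omega)]
    have := hcomp2 j i hij hi
    linarith

include hN hc hcφ hk01 hk0N hk0 hK hh in
lemma A1_bound {j b : ℕ} (hj : j ≤ N)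
    (hmin : h j + F0i φ N ((M:ℤ) - j - b) ≤ F0 φ N b) :
    c * ((M:ℝ) - N) ≤ 2*(c*(b:ℝ)) + K := by
  have ub := U3x.F0_ub hN hc hcφ hK k0 hk01 hk0N hk0 b
  have L := le_F0i hN hc hcφ (z := (M:ℤ) - j - b)
  have Lc : (((M:ℤ) - j - b : ℤ) : ℝ) = (M:ℝ) - j - b := by push_cast; ring
  rw [Lc] at L
  have pj : c * (j:ℝ) ≤ c * N :=
    mul_le_mul_of_nonneg_left (by exact_mod_cast hj) hc.le
  have hhj := hh j hj
  linarith

include hN hc hcφ hk01 hk0N hk0 hK hh in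
lemma A2_bound {i j a : ℕ} (hi : i ≤ N) (hj : j ≤ N)
    (hmin : h i + h j + F0i φ N (2*(M:ℤ) - i - j - a) ≤ F0 φ N a) :
    c * (2*(M:ℝ) - 2*N) ≤ 2*(c*(a:ℝ)) + K := by
  have ub := U3x.F0_ub hN hc hcφ hK k0 hk01 hk0N hk0 a
  have L := le_F0i hN hc hcφ (z := 2*(M:ℤ) - i - j - a)
  have Lc : ((2*(M:ℤ) - i - j - a : ℤ) : ℝ) = 2*(M:ℝ) - i - j - a := by push_cast; ring
  rw [Lc] at L
  have pi' : c * (i:ℝ) ≤ c * N :=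
    mul_le_mul_of_nonneg_left (by exact_mod_cast hi) hc.le
  have pj : c * (j:ℝ) ≤ c * N :=
    mul_le_mul_of_nonneg_left (by exact_mod_cast hj) hc.le
  have hhi := hh i hi
  have hhj := hh j hj
  linarith

include hN hφ0 hsub hrev hc hcφ hk01 hk0N hk0 hK hh hH hcomp2 hM in
lemma psi_sub (a b : ℕ) (hab : a + b ≤ M) :
    psi φ h N M (a + b) ≤ psi φ h N M a + psi φ h N M b := by
  have hK0' : 0 < K := hK0 hc hcφ k0 hk01 hk0N hk0 hK
  have hH0' : 0 < H := hH0 hN hh hH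
  have hNr : (0:ℝ) ≤ c * N := by positivity
  have habr : c * ((a:ℝ) + b) ≤ c * M := by
    have : ((a:ℝ) + b) ≤ M := by exact_mod_cast hab
    exact mul_le_mul_of_nonneg_left this hc.le
  have addF := F0i_add hN hφ0 hsub hrev hc hcφ (φ := φ)
  have negF := F0i_neg (φ := φ) (N := N)
  have natF := F0i_natCast (φ := φ) (N := N)
  rcases psi_cases (φ := φ) (h := h) (N := N) (M := M) a with
    ha | ⟨i, hi, ha⟩ | ⟨i, i', hi, hi', ha⟩ <;>
    rcases psi_cases (φ := φ) (h := h) (N := N) (M := M) b with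
      hb | ⟨j, hj, hb⟩ | ⟨j, j', hj, hj', hb⟩
  -- (F0, F0)
  · rw [ha, hb]
    exact le_trans (psi_le_F0 (φ := φ) (h := h) (N := N) (M := M) (a+b)) (U3x.F0_add hN hφ0 hsub a b)
  -- (F0, A1 j)
  · rw [ha, hb]
    have e1 : (M:ℤ) - j - ((a+b : ℕ) : ℤ) = ((M:ℤ) - j - b) + (-(a:ℤ)) := by
      push_cast; ring
    have t := psi_le_A1 (φ := φ) (h := h) (M := M) hj (a+b)
    rw [e1] at t
    have t2 := addF ((M:ℤ) - j - b) (-(a:ℤ))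
    rw [negF, natF] at t2
    linarith
  -- (F0, A2 j j')
  · rw [ha, hb]
    have e1 : 2*(M:ℤ) - j - j' - ((a+b : ℕ) : ℤ) = (2*(M:ℤ) - j - j' - b) + (-(a:ℤ)) := by
      push_cast; ring
    have t := psi_le_A2 (φ := φ) (h := h) (M := M) hj hj' (a+b)
    rw [e1] at t
    have t2 := addF (2*(M:ℤ) - j - j' - b) (-(a:ℤ))
    rw [negF, natF] at t2
    linarith
  -- (A1 i, F0)
  · rw [ha, hb]
    have e1 : (M:ℤ) - i - ((a+b : ℕ) : ℤ) = ((M:ℤ) - i - a) + (-(b:ℤ)) := by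
      push_cast; ring
    have t := psi_le_A1 (φ := φ) (h := h) (M := M) hi (a+b)
    rw [e1] at t
    have t2 := addF ((M:ℤ) - i - a) (-(b:ℤ))
    rw [negF, natF] at t2
    linarith
  -- (A1 i, A1 j)
  · rw [ha, hb]
    have e1 : 2*(M:ℤ) - i - j - ((a+b : ℕ) : ℤ) = ((M:ℤ) - i - a) + ((M:ℤ) - j - b) := by
      push_cast; ring
    have t := psi_le_A2 (φ := φ) (h := h) (M := M) hi hj (a+b)
    rw [e1] at t
    have t2 := addF ((M:ℤ) - i - a) ((M:ℤ) - j - b)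
    linarith
  -- (A1 i, A2 j j') : vacuous
  · exfalso
    have b1 : c * ((M:ℝ) - N) ≤ 2*(c*(a:ℝ)) + K := by
      refine A1_bound hN hc hcφ k0 hk01 hk0N hk0 hK hh hi ?_
      rw [← ha]; exact psi_le_F0 (φ := φ) (h := h) (N := N) (M := M) a
    have b2 : c * (2*(M:ℝ) - 2*N) ≤ 2*(c*(b:ℝ)) + K := by
      refine A2_bound hN hc hcφ k0 hk01 hk0N hk0 hK hh hj hj' ?_
      rw [← hb]; exact psi_le_F0 (φ := φ) (h := h) (N := N) (M := M) b
    linarith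
  -- (A2 i i', F0)
  · rw [ha, hb]
    have e1 : 2*(M:ℤ) - i - i' - ((a+b : ℕ) : ℤ) = (2*(M:ℤ) - i - i' - a) + (-(b:ℤ)) := by
      push_cast; ring
    have t := psi_le_A2 (φ := φ) (h := h) (M := M) hi hi' (a+b)
    rw [e1] at t
    have t2 := addF (2*(M:ℤ) - i - i' - a) (-(b:ℤ))
    rw [negF, natF] at t2
    linarith
  -- (A2 i i', A1 j) : vacuous
  · exfalso
    have b1 : c * (2*(M:ℝ) - 2*N) ≤ 2*(c*(a:ℝ)) + K := by
      refine A2_bound hN hc hcφ k0 hk01 hk0N hk0 hK hh hi hi' ?_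
      rw [← ha]; exact psi_le_F0 (φ := φ) (h := h) (N := N) (M := M) a
    have b2 : c * ((M:ℝ) - N) ≤ 2*(c*(b:ℝ)) + K := by
      refine A1_bound hN hc hcφ k0 hk01 hk0N hk0 hK hh hj ?_
      rw [← hb]; exact psi_le_F0 (φ := φ) (h := h) (N := N) (M := M) b
    linarith
  -- (A2, A2) : vacuous
  · exfalso
    have b1 : c * (2*(M:ℝ) - 2*N) ≤ 2*(c*(a:ℝ)) + K := by
      refine A2_bound hN hc hcφ k0 hk01 hk0N hk0 hK hh hi hi' ?_
      rw [← ha]; exact psi_le_F0 (φ := φ) (h := h) (N := N) (M := M) a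
    have b2 : c * (2*(M:ℝ) - 2*N) ≤ 2*(c*(b:ℝ)) + K := by
      refine A2_bound hN hc hcφ k0 hk01 hk0N hk0 hK hh hj hj' ?_
      rw [← hb]; exact psi_le_F0 (φ := φ) (h := h) (N := N) (M := M) b
    linarith

include hN hφ0 hsub hrev hc hcφ hk01 hk0N hk0 hK hh hH hcomp2 hM in
lemma psi_rev (a b : ℕ) (hab : a + b ≤ M) :
    psi φ h N M a ≤ psi φ h N M (a + b) + psi φ h N M b := by
  have hK0' : 0 < K := hK0 hc hcφ k0 hk01 hk0N hk0 hK
  have hH0' : 0 < H := hH0 hN hh hH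
  have hNr : (0:ℝ) ≤ c * N := by positivity
  have habr : c * ((a:ℝ) + b) ≤ c * M := by
    have : ((a:ℝ) + b) ≤ M := by exact_mod_cast hab
    exact mul_le_mul_of_nonneg_left this hc.le
  have addF := F0i_add hN hφ0 hsub hrev hc hcφ (φ := φ)
  have negF := F0i_neg (φ := φ) (N := N)
  have natF := F0i_natCast (φ := φ) (N := N)
  have nnF := F0i_nonneg hN hc hcφ (φ := φ)
  have uba := U3x.F0_ub hN hc hcφ hK k0 hk01 hk0N hk0 a
  rcases psi_cases (φ := φ) (h := h) (N := N) (M := M) b with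
    hb | ⟨j, hj, hb⟩ | ⟨j, j', hj, hj', hb⟩
  · -- b on F0 branch
    rcases psi_cases (φ := φ) (h := h) (N := N) (M := M) (a+b) with
      hs | ⟨i, hi, hs⟩ | ⟨i, i', hi, hi', hs⟩
    · rw [hs, hb]
      exact le_trans (psi_le_F0 (φ := φ) (h := h) (N := N) (M := M) a) (U3x.F0_rev hN hφ0 hsub hrev a b)
    · rw [hs, hb]
      have e1 : (M:ℤ) - i - (a : ℤ) = ((M:ℤ) - i - ((a+b:ℕ):ℤ)) + (b:ℤ) := by
        push_cast; ring
      have t := psi_le_A1 (φ := φ) (h := h) (M := M) hi a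
      rw [e1] at t
      have t2 := addF ((M:ℤ) - i - ((a+b:ℕ):ℤ)) ((b:ℤ))
      rw [natF] at t2
      linarith
    · rw [hs, hb]
      have e1 : 2*(M:ℤ) - i - i' - (a : ℤ) = (2*(M:ℤ) - i - i' - ((a+b:ℕ):ℤ)) + (b:ℤ) := by
        push_cast; ring
      have t := psi_le_A2 (φ := φ) (h := h) (M := M) hi hi' a
      rw [e1] at t
      have t2 := addF (2*(M:ℤ) - i - i' - ((a+b:ℕ):ℤ)) ((b:ℤ))
      rw [natF] at t2
      linarith
  · -- b on A1 branch
    have bmin : h j + F0i φ N ((M:ℤ) - j - b) ≤ F0 φ N b := by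
      rw [← hb]; exact psi_le_F0 (φ := φ) (h := h) (N := N) (M := M) b
    have bbd := A1_bound hN hc hcφ k0 hk01 hk0N hk0 hK hh hj bmin
    rcases psi_cases (φ := φ) (h := h) (N := N) (M := M) (a+b) with
      hs | ⟨i, hi, hs⟩ | ⟨i, i', hi, hi', hs⟩
    · -- (F0 @ s, A1 @ b)
      rw [hs, hb]
      have lbs := U3x.F0_lb hN hc hcφ (a+b)
      have hhj := hh j hj
      have nn1 := nnF ((M:ℤ) - j - b)
      have t := le_trans (psi_le_F0 (φ := φ) (h := h) (N := N) (M := M) a) uba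
      have ecast : ((a+b : ℕ):ℝ) = (a:ℝ) + b := by push_cast; ring
      rw [ecast] at lbs
      linarith
    · -- (A1 i @ s, A1 j @ b)
      rw [hs, hb]
      have t : psi φ h N M a ≤ F0i φ N (a:ℤ) := by rw [natF]; exact psi_le_F0 (φ := φ) (h := h) (N := N) (M := M) a
      have e1 : (a:ℤ) = (((j:ℤ) - i) + (-((M:ℤ) - i - ((a+b:ℕ):ℤ)))) + ((M:ℤ) - j - b) := by
        push_cast; ring
      rw [e1] at t
      have t2 := addF (((j:ℤ) - i) + (-((M:ℤ) - i - ((a+b:ℕ):ℤ)))) ((M:ℤ) - j - b)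
      have t3 := addF ((j:ℤ) - i) (-((M:ℤ) - i - ((a+b:ℕ):ℤ)))
      rw [negF] at t3
      have t4 := F0i_compat hN hcomp2 (h := h) hi hj
      linarith
    · -- (A2 (i,i') @ s, A1 j @ b)
      rw [hs, hb]
      have t := psi_le_A1 (φ := φ) (h := h) (M := M) hi a
      have e1 : (M:ℤ) - i - (a:ℤ) =
          (((i':ℤ) - j) + (2*(M:ℤ) - i - i' - ((a+b:ℕ):ℤ))) + (-((M:ℤ) - j - b)) := by
        push_cast; ring
      rw [e1] at t
      have t2 := addF (((i':ℤ) - j) + (2*(M:ℤ) - i - i' - ((a+b:ℕ):ℤ))) (-((M:ℤ) - j - b))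
      rw [negF] at t2
      have t3 := addF ((i':ℤ) - j) (2*(M:ℤ) - i - i' - ((a+b:ℕ):ℤ))
      have t4 := F0i_compat hN hcomp2 (h := h) hj hi'
      linarith
  · -- b on A2 branch : bound route
    rw [hb]
    have t := le_trans (psi_le_F0 (φ := φ) (h := h) (N := N) (M := M) a) uba
    have L := le_F0i hN hc hcφ (z := 2*(M:ℤ) - j - j' - b)
    have Lc : ((2*(M:ℤ) - j - j' - b : ℤ) : ℝ) = 2*(M:ℝ) - j - j' - b := by push_cast; ring
    rw [Lc] at L
    have pj : c * (j:ℝ) ≤ c * N :=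
      mul_le_mul_of_nonneg_left (by exact_mod_cast hj) hc.le
    have pj' : c * (j':ℝ) ≤ c * N :=
      mul_le_mul_of_nonneg_left (by exact_mod_cast hj') hc.le
    have hhj := hh j hj
    have hhj' := hh j' hj'
    have nns := psi_nonneg hN hc hcφ hh (φ := φ) (h := h) (M := M) (a+b)
    linarith

end Psi2
end U3

namespace U3
section Realize
variable {X : Type*} [MetricSpace X]

/-- The Urysohn extension property. -/
def ExtProp (X : Type*) [MetricSpace X] : Prop :=
  ∀ (A : Finset X) (g : X → ℝ),
    (∀ a ∈ A, 0 ≤ g a) →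
    (∀ a ∈ A, ∀ b ∈ A, |g a - g b| ≤ dist a b ∧ dist a b ≤ g a + g b) →
    ∃ z : X, ∀ a ∈ A, dist z a = g a

lemma ext_fin (hext : ExtProp X) {n : ℕ} (p : Fin n → X) (hp : Function.Injective p)
    (r : Fin n → ℝ) (h0 : ∀ i, 0 ≤ r i)
    (hpair : ∀ i j, |r i - r j| ≤ dist (p i) (p j) ∧ dist (p i) (p j) ≤ r i + r j) :
    ∃ z : X, ∀ i, dist z (p i) = r i := by
  classical
  set A : Finset X := Finset.image p Finset.univ with hA
  set g : X → ℝ := fun w => if hw : ∃ i, p i = w then r (Classical.choose hw) else 0 with hgdef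
  have hg : ∀ i, g (p i) = r i := by
    intro i
    have hw : ∃ j, p j = p i := ⟨i, rfl⟩
    simp only [hgdef, dif_pos hw]
    have := Classical.choose_spec hw
    rw [hp this]
  have hmem : ∀ a ∈ A, ∃ i, p i = a := by
    intro a ha
    rw [hA, Finset.mem_image] at ha
    obtain ⟨i, -, hi⟩ := ha
    exact ⟨i, hi⟩
  obtain ⟨z, hz⟩ := hext A g
    (by
      intro a ha
      obtain ⟨i, hi⟩ := hmem a ha
      rw [← hi, hg]; exact h0 i)
    (by
      intro a ha b hb
      obtain ⟨i, hi⟩ := hmem a ha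
      obtain ⟨j, hj⟩ := hmem b hb
      rw [← hi, ← hj, hg, hg]
      exact hpair i j)
  refine ⟨z, fun i => ?_⟩
  rw [← hg i]
  exact hz (p i) (by rw [hA, Finset.mem_image]; exact ⟨i, Finset.mem_univ i, rfl⟩)

lemma perturb (hext : ExtProp X) (x : ℕ → X) (N : ℕ) (p : X) (η : ℝ) (hη : 0 < η) :
    ∃ y : X, dist y p = η ∧ ∀ i, i ≤ N → dist y (x i) = dist p (x i) + η := by
  classical
  set A : Finset X := insert p (Finset.image x (Finset.range (N+1))) with hA
  set g : X → ℝ := fun w => dist p w + η with hgdef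
  obtain ⟨z, hz⟩ := hext A g
    (by intro a _; simp only [hgdef]; positivity)
    (by
      intro a _ b _
      constructor
      · simp only [hgdef]
        rw [show dist p a + η - (dist p b + η) = dist p a - dist p b by ring]
        have := abs_dist_sub_le a b p
        rw [dist_comm a p, dist_comm b p] at this
        exact this
      · simp only [hgdef]
        have h1 := dist_triangle a p b
        have := dist_comm a p
        linarith)
  refine ⟨z, ?_, ?_⟩
  · have := hz p (by rw [hA]; exact Finset.mem_insert_self _ _)
    simpa [hgdef] using this
  · intro i hi
    have := hz (x i) (by
      rw [hA]
      refine Finset.mem_insert_of_mem (Finset.mem_image.mpr ⟨i, Finset.mem_range.mpr (by omega), rfl⟩))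
    simpa [hgdef] using this

/-- Translation invariance of a finite initial segment. -/
def Inv (x : ℕ → X) (N : ℕ) : Prop :=
  (∀ i k, i + k ≤ N → dist (x i) (x (i + k)) = dist (x 0) (x k)) ∧
  (∀ k, 1 ≤ k → k ≤ N → 0 < dist (x 0) (x k))

lemma step_lemma (hext : ExtProp X) (x : ℕ → X) (N : ℕ) (hN : 1 ≤ N)
    (hInv : Inv x N) (y : X) (hy : ∀ i, i ≤ N → 0 < dist y (x i)) :
    ∃ (x' : ℕ → X) (M : ℕ), N < M ∧ (∀ i, i ≤ N → x' i = x i) ∧ Inv x' M ∧ x' M = y := by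
  classical
  set φ : ℕ → ℝ := fun n => dist (x 0) (x n) with hφdef
  set h : ℕ → ℝ := fun i => dist y (x i) with hhdef
  -- profile facts
  have hφ0 : φ 0 = 0 := dist_self _
  have hφpos : ∀ k, 1 ≤ k → k ≤ N → 0 < φ k := hInv.2
  have hdistij : ∀ i j, i ≤ j → j ≤ N → dist (x i) (x j) = φ (j - i) := by
    intro i j hij hj
    have := hInv.1 i (j - i) (by omega)
    rw [show i + (j - i) = j by omega] at this
    exact this
  have hsub : ∀ a b, a + b ≤ N → φ (a + b) ≤ φ a + φ b := by
    intro a b hab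
    have h1 := dist_triangle (x 0) (x a) (x (a + b))
    have h2 := hInv.1 a b hab
    simp only [hφdef]
    linarith
  have hrev : ∀ a b, a + b ≤ N → φ a ≤ φ (a + b) + φ b := by
    intro a b hab
    have h1 := dist_triangle (x 0) (x (a + b)) (x a)
    have h2 := hInv.1 a b hab
    have h3 := dist_comm (x (a + b)) (x a)
    simp only [hφdef]
    linarith
  -- constants
  have hne : (Finset.Icc 1 N).Nonempty := ⟨1, by simp [Finset.mem_Icc]; omega⟩
  set c : ℝ := (Finset.Icc 1 N).inf' hne (fun k => φ k / k) with hcdef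
  have hc : 0 < c := by
    rw [hcdef, Finset.lt_inf'_iff]
    intro k hk
    rw [Finset.mem_Icc] at hk
    have := hφpos k hk.1 hk.2
    have : (0:ℝ) < (k:ℝ) := by exact_mod_cast hk.1
    positivity
  have hcφ : ∀ k, k ≤ N → c * k ≤ φ k := by
    intro k hk
    rcases Nat.eq_zero_or_pos k with hk0 | hk0
    · subst hk0; simp [hφ0]
    · have hc_le : c ≤ φ k / k := Finset.inf'_le _ (by rw [Finset.mem_Icc]; omega)
      have hkr : (0:ℝ) < (k:ℝ) := by exact_mod_cast hk0
      rw [div_eq_inv_mul] at hc_le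
      calc c * k ≤ ((k:ℝ)⁻¹ * φ k) * k := by
            apply mul_le_mul_of_nonneg_right hc_le (le_of_lt hkr)
      _ = φ k := by field_simp
  obtain ⟨k0, hk0mem, hk0eq⟩ := Finset.exists_mem_eq_inf' hne (fun k => φ k / k)
  rw [Finset.mem_Icc] at hk0mem
  have hk01 : 1 ≤ k0 := hk0mem.1
  have hk0N : k0 ≤ N := hk0mem.2
  have hk0 : φ k0 = c * k0 := by
    have hkr : ((k0:ℝ)) ≠ 0 := by
      have : (0:ℝ) < (k0:ℝ) := by exact_mod_cast hk01
      linarith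
    rw [hcdef, hk0eq]
    field_simp
  set K : ℝ := (Finset.range (N+1)).sup' ⟨0, Finset.mem_range.mpr (Nat.succ_pos N)⟩ φ with hKdef
  have hK : ∀ k, k ≤ N → φ k ≤ K :=
    fun k hk => Finset.le_sup' _ (Finset.mem_range.mpr (by omega))
  set H : ℝ := (Finset.range (N+1)).sup' ⟨0, Finset.mem_range.mpr (Nat.succ_pos N)⟩ h with hHdef
  have hHle : ∀ i, i ≤ N → h i ≤ H :=
    fun i hi => Finset.le_sup' _ (Finset.mem_range.mpr (by omega))
  have hh : ∀ i, i ≤ N → 0 < h i := hy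
  -- compatibility
  have hcomp1 : ∀ i j, i ≤ j → j ≤ N → h j ≤ h i + φ (j - i) := by
    intro i j hij hj
    have h1 := dist_triangle y (x i) (x j)
    rw [hdistij i j hij hj] at h1
    exact h1
  have hcomp1' : ∀ i j, i ≤ j → j ≤ N → h i ≤ h j + φ (j - i) := by
    intro i j hij hj
    have h1 := dist_triangle y (x j) (x i)
    rw [dist_comm (x j) (x i), hdistij i j hij hj] at h1
    exact h1
  have hcomp2 : ∀ i j, i ≤ j → j ≤ N → φ (j - i) ≤ h i + h j := by
    intro i j hij hj
    have h1 := dist_triangle (x i) y (x j)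
    rw [← hdistij i j hij hj]
    rw [dist_comm (x i) y] at h1
    exact h1
  -- choose M
  obtain ⟨M, hMge⟩ := exists_nat_ge ((c * (4*N) + 3*K + 3*H + 3) / c)
  have hM : c * (4*N) + 3*K + 3*H + 3 ≤ c * M := by
    have := mul_le_mul_of_nonneg_left hMge hc.le
    rwa [mul_div_cancel₀ _ (ne_of_gt hc)] at this
  have hK0' : 0 < K := hK0 hc hcφ k0 hk01 hk0N hk0 hK
  have hH0' : 0 < H := hH0 hN hh hHle
  have hMN' : 4 * N ≤ M := hMN hN hc hcφ k0 hk01 hk0N hk0 hK hh hHle hM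
  have hNM : N < M := by omega
  -- abbreviations for psi lemmas
  set ψ : ℕ → ℝ := psi φ h N M with hψdef
  have Ppin1 : ∀ k, k ≤ N → ψ k = φ k :=
    fun k hk => psi_pin1 hN hc hcφ k0 hk01 hk0N hk0 hK hh hHle hM k hk
  have Ppin2 : ∀ i, i ≤ N → ψ (M - i) = h i :=
    fun i hi => psi_pin2 hN hφ0 hc hcφ k0 hk01 hk0N hk0 hK hh hHle hcomp1 hcomp1' hM i hi
  have Ppos : ∀ n, 1 ≤ n → 0 < ψ n := fun n hn => psi_pos hN hc hcφ hh n hn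
  have Pnn : ∀ n, 0 ≤ ψ n := fun n => psi_nonneg hN hc hcφ hh n
  have Pzero : ψ 0 = 0 := psi_zero hN hφ0 hc hcφ hh
  have Psub : ∀ a b, a + b ≤ M → ψ (a + b) ≤ ψ a + ψ b :=
    fun a b hab => psi_sub hN hφ0 hsub hrev hc hcφ k0 hk01 hk0N hk0 hK hh hHle hcomp2 hM a b hab
  have Prev : ∀ a b, a + b ≤ M → ψ a ≤ ψ (a + b) + ψ b :=
    fun a b hab => psi_rev hN hφ0 hsub hrev hc hcφ k0 hk01 hk0N hk0 hK hh hHle hcomp2 hM a b hab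
  -- realization by induction
  have main : ∀ d : ℕ, N + d ≤ M - 1 →
      ∃ z : ℕ → X, (∀ i, i ≤ N → z i = x i) ∧
        (∀ i j, i ≤ j → j ≤ N + d → dist (z i) (z j) = ψ (j - i)) ∧
        (∀ i, i ≤ N + d → dist y (z i) = ψ (M - i)) := by
    intro d
    induction d with
    | zero =>
      intro _
      refine ⟨x, fun i _ => rfl, ?_, ?_⟩
      · intro i j hij hj
        rw [hdistij i j hij (by omega), Ppin1 (j - i) (by omega)]
      · intro i hi
        rw [Ppin2 i (by omega)]
    | succ d ih =>
      intro hd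
      obtain ⟨z, hzx, hzz, hzy⟩ := ih (by omega)
      set t : ℕ := N + d with htdef
      -- build the tuple
      set p : Fin (t+2) → X := fun k => if (k:ℕ) ≤ t then z k else y with hpdef
      set r : Fin (t+2) → ℝ := fun k => if (k:ℕ) ≤ t then ψ (t+1 - k) else ψ (M - (t+1)) with hrdef
      have htM : t + 1 ≤ M - 1 := hd
      have htM' : t + 2 ≤ M := by omega
      -- key pair facts on naturals
      have key : ∀ u v : ℕ, u ≤ v → v ≤ t + 1 →
          |(if u ≤ t then ψ (t+1-u) else ψ (M-(t+1))) - (if v ≤ t then ψ (t+1-v) else ψ (M-(t+1)))|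
            ≤ dist (if u ≤ t then z u else y) (if v ≤ t then z v else y) ∧
          dist (if u ≤ t then z u else y) (if v ≤ t then z v else y)
            ≤ (if u ≤ t then ψ (t+1-u) else ψ (M-(t+1))) + (if v ≤ t then ψ (t+1-v) else ψ (M-(t+1))) := by
        intro u v huv hv
        by_cases hu : u ≤ t
        · by_cases hvt : v ≤ t
          · simp only [if_pos hu, if_pos hvt]
            rw [hzz u v huv (by omega)]
            have e1 : (t+1-v) + (v-u) = t+1-u := by omega
            have s1 : ψ (t+1-u) ≤ ψ (t+1-v) + ψ (v-u) := by
              rw [← e1]; exact Psub _ _ (by omega)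
            have s2 : ψ (t+1-v) ≤ ψ (t+1-u) + ψ (v-u) := by
              have := Prev (t+1-v) (v-u) (by omega)
              rwa [e1] at this
            have e2 : (v-u) + (t+1-v) = t+1-u := by omega
            have s3 : ψ (v-u) ≤ ψ (t+1-u) + ψ (t+1-v) := by
              have := Prev (v-u) (t+1-v) (by omega)
              rwa [e2] at this
            constructor
            · rw [abs_sub_le_iff]; constructor <;> linarith
            · linarith
          · have hv1 : v = t + 1 := by omega
            simp only [if_pos hu, if_neg hvt]
            rw [dist_comm (z u) y, hzy u (by omega)]
            have e1 : (t+1-u) + (M-(t+1)) = M - u := by omega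
            have s1 : ψ (M-u) ≤ ψ (t+1-u) + ψ (M-(t+1)) := by
              rw [← e1]; exact Psub _ _ (by omega)
            have s2 : ψ (t+1-u) ≤ ψ (M-u) + ψ (M-(t+1)) := by
              have := Prev (t+1-u) (M-(t+1)) (by omega)
              rwa [e1] at this
            have e2 : (M-(t+1)) + (t+1-u) = M - u := by omega
            have s3 : ψ (M-(t+1)) ≤ ψ (M-u) + ψ (t+1-u) := by
              have := Prev (M-(t+1)) (t+1-u) (by omega)
              rwa [e2] at this
            constructor
            · rw [abs_sub_le_iff]; constructor <;> linarith
            · linarith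
        · have hu1 : u = t + 1 := by omega
          have hv1 : v = t + 1 := by omega
          simp only [hu1, hv1, if_neg (show ¬ t + 1 ≤ t by omega), dist_self, sub_self, abs_zero]
          constructor
          · exact le_refl _
          · have := Pnn (M - (t+1)); linarith
      -- injectivity
      have hpinj : Function.Injective p := by
        intro k₁ k₂ hk
        by_contra hne'
        have hne'' : (k₁ : ℕ) ≠ (k₂ : ℕ) := fun hc' => hne' (Fin.ext hc')
        simp only [hpdef] at hk
        rcases Nat.lt_or_ge (k₁ : ℕ) (k₂ : ℕ) with hlt | hge
        · by_cases h2 : (k₂ : ℕ) ≤ t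
          · simp only [if_pos (show (k₁:ℕ) ≤ t by omega), if_pos h2] at hk
            have := hzz k₁ k₂ (by omega) (by omega)
            rw [hk, dist_self] at this
            have := Ppos ((k₂:ℕ) - k₁) (by omega)
            linarith
          · simp only [if_pos (show (k₁:ℕ) ≤ t by omega), if_neg h2] at hk
            have := hzy k₁ (by omega)
            rw [← hk, dist_self] at this
            have := Ppos (M - (k₁:ℕ)) (by omega)
            linarith
        · have hlt' : (k₂ : ℕ) < (k₁ : ℕ) := by omega
          by_cases h2 : (k₁ : ℕ) ≤ t
          · simp only [if_pos (show (k₂:ℕ) ≤ t by omega), if_pos h2] at hk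
            have := hzz k₂ k₁ (by omega) (by omega)
            rw [← hk, dist_self] at this
            have := Ppos ((k₁:ℕ) - k₂) (by omega)
            linarith
          · simp only [if_neg h2, if_pos (show (k₂:ℕ) ≤ t by omega)] at hk
            have := hzy k₂ (by omega)
            rw [hk, dist_self] at this
            have := Ppos (M - (k₂:ℕ)) (by omega)
            linarith
      have h0 : ∀ k, 0 ≤ r k := by
        intro k
        simp only [hrdef]
        by_cases hk : (k:ℕ) ≤ t
        · simp only [if_pos hk]; exact Pnn _
        · simp only [if_neg hk]; exact Pnn _
      have hpair : ∀ k₁ k₂, |r k₁ - r k₂| ≤ dist (p k₁) (p k₂) ∧ dist (p k₁) (p k₂) ≤ r k₁ + r k₂ := by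
        intro k₁ k₂
        have hb1 : (k₁ : ℕ) ≤ t + 1 := by omega
        have hb2 : (k₂ : ℕ) ≤ t + 1 := by omega
        rcases le_total (k₁ : ℕ) (k₂ : ℕ) with hle | hle
        · exact key k₁ k₂ hle hb2
        · obtain ⟨c1, c2⟩ := key k₂ k₁ hle hb1
          constructor
          · rw [abs_sub_comm, dist_comm]; exact c1
          · rw [dist_comm]; linarith
      obtain ⟨w, hw⟩ := ext_fin hext p hpinj r h0 hpair
      have hwz : ∀ i : ℕ, (hi : i ≤ t) → dist w (z i) = ψ (t+1-i) := by
        intro i hi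
        have hlt : i < t + 2 := by omega
        have h1 := hw ⟨i, hlt⟩
        have hcoe : ((⟨i, hlt⟩ : Fin (t+2)) : ℕ) = i := rfl
        simp only [hpdef, hrdef, hcoe, if_pos hi] at h1
        exact h1
      have hwy : dist w y = ψ (M - (t+1)) := by
        have hlt : t + 1 < t + 2 := by omega
        have h1 := hw ⟨t+1, hlt⟩
        have hcoe : ((⟨t+1, hlt⟩ : Fin (t+2)) : ℕ) = t+1 := rfl
        simp only [hpdef, hrdef, hcoe, if_neg (show ¬ (t+1 ≤ t) by omega)] at h1
        exact h1
      set z' : ℕ → X := fun n => if n = t + 1 then w else z n with hz'def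
      refine ⟨z', ?_, ?_, ?_⟩
      · intro i hi
        simp only [hz'def, if_neg (show ¬ i = t + 1 by omega)]
        exact hzx i hi
      · intro i j hij hj
        by_cases hjt : j ≤ t
        · simp only [hz'def, if_neg (show ¬ i = t + 1 by omega), if_neg (show ¬ j = t + 1 by omega)]
          exact hzz i j hij (by omega)
        · have hj1 : j = t + 1 := by omega
          subst hj1
          by_cases hit : i ≤ t
          · simp only [hz'def, if_neg (show ¬ i = t + 1 by omega), if_pos rfl]
            rw [dist_comm]
            exact hwz i hit
          · have : i = t + 1 := by omega
            subst this
            simp only [hz'def, if_pos rfl]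
            rw [dist_self, show t+1-(t+1) = 0 by omega, Pzero]
      · intro i hi
        by_cases hit : i ≤ t
        · simp only [hz'def, if_neg (show ¬ i = t + 1 by omega)]
          exact hzy i (by omega)
        · have : i = t + 1 := by omega
          subst this
          simp only [hz'def, if_pos rfl]
          rw [dist_comm]
          exact hwy
  -- conclude
  obtain ⟨z, hzx, hzz, hzy⟩ := main (M - 1 - N) (by omega)
  have hMn : N + (M - 1 - N) = M - 1 := by omega
  rw [hMn] at hzz hzy
  set x' : ℕ → X := fun n => if n = M then y else z n with hx'def
  have dd : ∀ i j, i ≤ j → j ≤ M → dist (x' i) (x' j) = ψ (j - i) := by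
    intro i j hij hj
    by_cases hjM : j = M
    · by_cases hiM : i = M
      · simp only [hx'def, hiM, hjM, if_pos rfl]
        rw [dist_self, show (M:ℕ) - M = 0 from by omega, Pzero]
      · simp only [hx'def, hjM, if_neg hiM, if_pos rfl]
        rw [dist_comm]
        exact hzy i (by omega)
    · simp only [hx'def, if_neg hjM, if_neg (show ¬ i = M by omega)]
      exact hzz i j hij (by omega)
  refine ⟨x', M, hNM, ?_, ⟨?_, ?_⟩, by simp only [hx'def, if_pos rfl]⟩
  · intro i hi
    simp only [hx'def, if_neg (show ¬ i = M by omega)]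
    exact hzx i hi
  · intro i k hik
    rw [dd i (i+k) (by omega) hik, dd 0 k (by omega) (by omega)]
    simp
  · intro k hk1 hk2
    rw [dd 0 k (by omega) hk2]
    simp only [Nat.sub_zero]
    exact Ppos k hk1

end Realize
end U3

namespace U3
section Final
variable {X : Type*} [MetricSpace X]

structure St (X : Type*) [MetricSpace X] where
  x : ℕ → X
  N : ℕ
  h1 : 1 ≤ N
  inv : Inv x N

lemma step_ex (hext : ExtProp X) (u : ℕ → X) (s : St X) (t : ℕ) :
    ∃ s' : St X, (s.N < s'.N) ∧ (∀ i, i ≤ s.N → s'.x i = s.x i) ∧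
      dist (s'.x s'.N) (u t.unpair.1) = 1/(t.unpair.2+1) := by
  set k := t.unpair.1
  set m := t.unpair.2
  have hη : (0:ℝ) < 1/(m+1) := by positivity
  obtain ⟨y, hy1, hy2⟩ := perturb hext s.x s.N (u k) (1/(m+1)) hη
  have hy : ∀ i, i ≤ s.N → 0 < dist y (s.x i) := by
    intro i hi
    rw [hy2 i hi]
    have := dist_nonneg (x := u k) (y := s.x i)
    linarith
  obtain ⟨x', M, hNM, hxext, hinv', hx'M⟩ := step_lemma hext s.x s.N s.h1 s.inv y hy
  refine ⟨⟨x', M, by omega, hinv'⟩, hNM, hxext, ?_⟩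
  simpa [hx'M] using hy1

noncomputable def chain (hext : ExtProp X) (u : ℕ → X) (s0 : St X) : ℕ → St X
  | 0 => s0
  | (t+1) => Classical.choose (step_ex hext u (chain hext u s0 t) t)

lemma chain_spec (hext : ExtProp X) (u : ℕ → X) (s0 : St X) (t : ℕ) :
    (chain hext u s0 t).N < (chain hext u s0 (t+1)).N ∧
    (∀ i, i ≤ (chain hext u s0 t).N →
      (chain hext u s0 (t+1)).x i = (chain hext u s0 t).x i) ∧
    dist ((chain hext u s0 (t+1)).x (chain hext u s0 (t+1)).N) (u t.unpair.1)
      = 1/(t.unpair.2+1) := by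
  have : chain hext u s0 (t+1) = Classical.choose (step_ex hext u (chain hext u s0 t) t) := by
    rw [chain]
  rw [this]
  exact Classical.choose_spec (step_ex hext u (chain hext u s0 t) t)

lemma chain_N_lt (hext : ExtProp X) (u : ℕ → X) (s0 : St X) :
    ∀ t, t < (chain hext u s0 t).N := by
  intro t
  induction t with
  | zero => exact (chain hext u s0 0).h1
  | succ t ih =>
    have := (chain_spec hext u s0 t).1
    omega

lemma chain_N_mono (hext : ExtProp X) (u : ℕ → X) (s0 : St X) :
    ∀ t t', t ≤ t' → (chain hext u s0 t).N ≤ (chain hext u s0 t').N := by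
  intro t t' h
  induction t', h using Nat.le_induction with
  | base => exact le_refl _
  | succ t' ht' ih =>
    have := (chain_spec hext u s0 t').1
    omega

lemma chain_x_stable (hext : ExtProp X) (u : ℕ → X) (s0 : St X) :
    ∀ t t', t ≤ t' → ∀ i, i ≤ (chain hext u s0 t).N →
      (chain hext u s0 t').x i = (chain hext u s0 t).x i := by
  intro t t' h
  induction t', h using Nat.le_induction with
  | base => intro i _; rfl
  | succ t' ht' ih =>
    intro i hi
    have h1 := (chain_spec hext u s0 t').2.1 i
      (le_trans hi (chain_N_mono hext u s0 t t' ht'))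
    rw [h1, ih i hi]

lemma exists_iso (xg : ℕ → X) [CompleteSpace X]
    (hshift : ∀ i j, dist (xg (i+1)) (xg (j+1)) = dist (xg i) (xg j))
    (htail : ∀ (T : ℕ) (w : X) (ε : ℝ), 0 < ε → ∃ n, T ≤ n ∧ dist (xg n) w < ε) :
    ∃ g : X → X, Function.Bijective g ∧ (∀ z w, dist (g z) (g w) = dist z w) ∧
      (∀ n, g (xg n) = xg (n+1)) := by
  classical
  have happrox : ∀ z : X, ∃ a : ℕ → ℕ, ∀ k : ℕ, dist (xg (a k)) z < 1/(k+1) := by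
    intro z
    have h := fun k : ℕ => htail 0 z (1/(k+1)) (by positivity)
    choose a _ h2 using h
    exact ⟨a, h2⟩
  choose a ha using happrox
  have hconv : ∀ z, Filter.Tendsto (fun k => xg (a z k)) Filter.atTop (nhds z) := by
    intro z
    rw [tendsto_iff_dist_tendsto_zero]
    exact squeeze_zero (fun k => dist_nonneg) (fun k => (ha z k).le)
      tendsto_one_div_add_atTop_nhds_zero_nat
  have invsmall : ∀ ε : ℝ, 0 < ε → ∃ Q : ℕ, ∀ n, Q ≤ n → 1/((n:ℝ)+1) < ε/2 := by
    intro ε hε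
    obtain ⟨Q, hQ⟩ := exists_nat_gt (2/ε)
    refine ⟨Q, fun n hn => ?_⟩
    have h1 : (0:ℝ) < (n:ℝ) + 1 := by positivity
    have h2 : 2/ε < (n:ℝ) + 1 := by
      have : (Q:ℝ) ≤ n := by exact_mod_cast hn
      linarith
    rw [div_lt_div_iff₀ h1 (by norm_num : (0:ℝ) < 2)]
    have := (div_lt_iff₀ hε).mp h2
    linarith
  have hcauchy : ∀ z, CauchySeq (fun k => xg (a z k + 1)) := by
    intro z
    rw [Metric.cauchySeq_iff']
    intro ε hε
    obtain ⟨Q, hQ⟩ := invsmall ε hε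
    refine ⟨Q, fun n hn => ?_⟩
    have e1 : dist (xg (a z n + 1)) (xg (a z Q + 1)) = dist (xg (a z n)) (xg (a z Q)) :=
      hshift _ _
    have htri : dist (xg (a z n)) (xg (a z Q)) ≤ dist (xg (a z n)) z + dist (xg (a z Q)) z := by
      have := dist_triangle (xg (a z n)) z (xg (a z Q))
      have := dist_comm z (xg (a z Q))
      linarith [dist_triangle (xg (a z n)) z (xg (a z Q)), dist_comm z (xg (a z Q))]
    have d1 := ha z n
    have d2 := ha z Q
    have b1 := hQ n hn
    have b2 := hQ Q (le_refl Q)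
    rw [e1]
    linarith
  have hlim : ∀ z, ∃ L, Filter.Tendsto (fun k => xg (a z k + 1)) Filter.atTop (nhds L) :=
    fun z => cauchySeq_tendsto_of_complete (hcauchy z)
  choose g hg using hlim
  have gdist : ∀ z w, dist (g z) (g w) = dist z w := by
    intro z w
    have T1 : Filter.Tendsto (fun k => dist (xg (a z k + 1)) (xg (a w k + 1)))
        Filter.atTop (nhds (dist (g z) (g w))) := (hg z).dist (hg w)
    have T2 : Filter.Tendsto (fun k => dist (xg (a z k + 1)) (xg (a w k + 1)))
        Filter.atTop (nhds (dist z w)) := by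
      have heq : (fun k => dist (xg (a z k + 1)) (xg (a w k + 1)))
          = fun k => dist (xg (a z k)) (xg (a w k)) := funext (fun k => hshift _ _)
      rw [heq]
      exact (hconv z).dist (hconv w)
    exact tendsto_nhds_unique T1 T2
  have gx : ∀ n, g (xg n) = xg (n + 1) := by
    intro n
    have T1 := hg (xg n)
    have T2 : Filter.Tendsto (fun k => xg (a (xg n) k + 1)) Filter.atTop (nhds (xg (n+1))) := by
      rw [tendsto_iff_dist_tendsto_zero]
      have heq : (fun k => dist (xg (a (xg n) k + 1)) (xg (n+1)))
          = fun k => dist (xg (a (xg n) k)) (xg n) := funext (fun k => hshift _ _)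
      rw [heq]
      exact squeeze_zero (fun _ => dist_nonneg) (fun k => (ha (xg n) k).le)
        tendsto_one_div_add_atTop_nhds_zero_nat
    exact tendsto_nhds_unique T1 T2
  have ginj : Function.Injective g := by
    intro z w hzw
    have := gdist z w
    rw [hzw, dist_self] at this
    exact dist_eq_zero.mp this.symm
  have gsurj : Function.Surjective g := by
    intro w
    have h := fun k : ℕ => htail 1 w (1/(k+1)) (by positivity)
    choose b hb1 hb2 using h
    have hby : ∀ k, xg ((b k - 1) + 1) = xg (b k) := fun k => by
      rw [Nat.sub_add_cancel (hb1 k)]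
    have hyc : CauchySeq (fun k => xg (b k - 1)) := by
      rw [Metric.cauchySeq_iff']
      intro ε hε
      obtain ⟨Q, hQ⟩ := invsmall ε hε
      refine ⟨Q, fun n hn => ?_⟩
      have e1 : dist (xg (b n - 1 + 1)) (xg (b Q - 1 + 1)) = dist (xg (b n - 1)) (xg (b Q - 1)) :=
        hshift _ _
      rw [hby n, hby Q] at e1
      rw [← e1]
      have d1 := hb2 n
      have d2 := hb2 Q
      have b1 := hQ n hn
      have b2 := hQ Q (le_refl Q)
      have htri := dist_triangle (xg (b n)) w (xg (b Q))
      have hcc := dist_comm w (xg (b Q))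
      linarith
    obtain ⟨z, hz⟩ := cauchySeq_tendsto_of_complete hyc
    refine ⟨z, ?_⟩
    have hgc : Continuous g := (Isometry.of_dist_eq gdist).continuous
    have T1 : Filter.Tendsto (fun k => g (xg (b k - 1))) Filter.atTop (nhds (g z)) :=
      (hgc.tendsto z).comp hz
    have T2 : Filter.Tendsto (fun k => g (xg (b k - 1))) Filter.atTop (nhds w) := by
      have heq : (fun k => g (xg (b k - 1))) = fun k => xg (b k) := funext fun k => by
        rw [gx, hby]
      rw [heq, tendsto_iff_dist_tendsto_zero]
      exact squeeze_zero (fun _ => dist_nonneg) (fun k => (hb2 k).le)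
        tendsto_one_div_add_atTop_nhds_zero_nat
    exact tendsto_nhds_unique T1 T2
  exact ⟨g, ⟨ginj, gsurj⟩, gdist, gx⟩

end Final
end U3

theorem stmt_3 (X : Type*) [MetricSpace X] (hX : IsUrysohn X) :
    ∃ g : X ≃ᵢ X, ∀ x : X, Dense {y : X | ∃ n : ℤ, (g ^ n) x = y} := by
  classical
  obtain ⟨hne, hcomp, hsep, hext'⟩ := hX
  haveI := hcomp
  haveI := hsep
  haveI := hne
  have hext : U3.ExtProp X := hext'
  obtain ⟨u, hu⟩ := TopologicalSpace.exists_dense_seq X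
  have hu' : ∀ (w : X) (ε : ℝ), 0 < ε → ∃ k, dist (u k) w < ε := by
    intro w ε hε
    obtain ⟨k, hk⟩ := Metric.denseRange_iff.mp hu w ε hε
    exact ⟨k, by rw [dist_comm]; exact hk⟩
  obtain ⟨x0⟩ := hne
  -- base state
  obtain ⟨y0, hy01, -⟩ := U3.perturb hext (fun _ => x0) 0 x0 1 one_pos
  set xb : ℕ → X := fun n => if n = 0 then x0 else y0 with hxb
  have hinvb : U3.Inv xb 1 := by
    constructor
    · intro i k hik
      have : i = 0 ∨ (i = 1 ∧ k = 0) := by omega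
      rcases this with hi | ⟨hi, hk⟩
      · rw [hi, Nat.zero_add]
      · rw [hi, hk]
        simp [hxb, dist_self]
    · intro k hk1 hk2
      have hk : k = 1 := by omega
      rw [hk]
      simp only [hxb, if_pos rfl, if_neg one_ne_zero]
      rw [dist_comm, hy01]
      norm_num
  set s0 : U3.St X := ⟨xb, 1, le_refl 1, hinvb⟩ with hs0
  -- the sequence
  set xg : ℕ → X := fun n => (U3.chain hext u s0 n).x n with hxg
  have hxg_eq : ∀ t n, n ≤ t → xg n = (U3.chain hext u s0 t).x n := by
    intro t n hn
    have h1 := U3.chain_x_stable hext u s0 n t hn n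
      (le_of_lt (U3.chain_N_lt hext u s0 n))
    rw [hxg]
    rw [h1]
  have hinv1 : ∀ i k, dist (xg i) (xg (i+k)) = dist (xg 0) (xg k) := by
    intro i k
    rw [hxg_eq (i+k) i (by omega), hxg_eq (i+k) (i+k) (le_refl _),
      hxg_eq (i+k) 0 (by omega), hxg_eq (i+k) k (by omega)]
    exact (U3.chain hext u s0 (i+k)).inv.1 i k
      (le_of_lt (U3.chain_N_lt hext u s0 (i+k)))
  have hshift : ∀ i j, dist (xg (i+1)) (xg (j+1)) = dist (xg i) (xg j) := by
    have main : ∀ i j, i ≤ j → dist (xg (i+1)) (xg (j+1)) = dist (xg i) (xg j) := by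
      intro i j hij
      have e1 := hinv1 (i+1) (j-i)
      rw [show i+1+(j-i) = j+1 by omega] at e1
      have e2 := hinv1 i (j-i)
      rw [show i+(j-i) = j by omega] at e2
      rw [e1, ← e2]
    intro i j
    rcases le_total i j with hij | hij
    · exact main i j hij
    · rw [dist_comm, main j i hij, dist_comm]
  have htail : ∀ (T : ℕ) (w : X) (ε : ℝ), 0 < ε → ∃ n, T ≤ n ∧ dist (xg n) w < ε := by
    intro T w ε hε
    obtain ⟨k, hk⟩ := hu' w (ε/2) (by positivity)
    obtain ⟨m0, hm0⟩ := exists_nat_gt (2/ε)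
    set m : ℕ := max T m0 with hm
    have hminv : 1/((m:ℝ)+1) < ε/2 := by
      have h1 : (0:ℝ) < (m:ℝ) + 1 := by positivity
      have h2 : 2/ε < (m:ℝ) + 1 := by
        have : (m0:ℝ) ≤ m := by exact_mod_cast le_max_right T m0
        linarith
      rw [div_lt_div_iff₀ h1 (by norm_num : (0:ℝ) < 2)]
      have := (div_lt_iff₀ hε).mp h2
      linarith
    set t : ℕ := Nat.pair k m with ht
    have hspec := (U3.chain_spec hext u s0 t).2.2
    rw [ht, Nat.unpair_pair] at hspec
    set n : ℕ := (U3.chain hext u s0 (t+1)).N with hn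
    have hnt : t + 1 < n := by
      rw [hn]
      exact U3.chain_N_lt hext u s0 (t+1)
    have hmt : m ≤ t := Nat.right_le_pair k m
    refine ⟨n, by omega, ?_⟩
    have hxgn : xg n = (U3.chain hext u s0 (t+1)).x n := by
      rw [hxg_eq n n (le_refl n)]
      exact U3.chain_x_stable hext u s0 (t+1) n (by omega) n (le_of_eq hn.symm)
    have htri := dist_triangle (xg n) (u k) w
    rw [hxgn]
    have hd1 : dist ((U3.chain hext u s0 (t+1)).x n) (u k) = 1/((m:ℝ)+1) := by
      rw [hn]; exact_mod_cast hspec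
    calc dist ((U3.chain hext u s0 (t+1)).x n) w
        ≤ dist ((U3.chain hext u s0 (t+1)).x n) (u k) + dist (u k) w := dist_triangle _ _ _
    _ = 1/((m:ℝ)+1) + dist (u k) w := by rw [hd1]
    _ < ε/2 + ε/2 := by linarith
    _ = ε := by ring
  -- the isometry
  obtain ⟨g, hbij, gdist, gx⟩ := U3.exists_iso xg hshift htail
  set e : X ≃ᵢ X := ⟨Equiv.ofBijective g hbij, Isometry.of_dist_eq gdist⟩ with he
  have ecoe : ∀ z : X, e z = g z := fun z => rfl
  have epow : ∀ (k n : ℕ), (e ^ k) (xg n) = xg (n + k) := by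
    intro k
    induction k with
    | zero => intro n; simp
    | succ k ih =>
      intro n
      rw [pow_succ]
      have : (e ^ k * e) (xg n) = (e ^ k) (e (xg n)) := rfl
      rw [this, ecoe, gx, ih (n+1)]
      congr 1
      omega
  have ezpow : ∀ (d : ℤ) (n m : ℕ), (n:ℤ) + d = m → (e ^ d) (xg n) = xg m := by
    intro d n m hd
    cases d with
    | ofNat k =>
      rw [Int.ofNat_eq_coe] at hd
      have hk : m = n + k := by omega
      rw [Int.ofNat_eq_coe, zpow_natCast, epow, hk]
    | negSucc k =>
      rw [Int.negSucc_eq] at hd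
      have hnm : n = m + (k+1) := by omega
      rw [zpow_negSucc]
      have hip : ((e ^ (k+1))⁻¹ : X ≃ᵢ X) = (e ^ (k+1)).symm := rfl
      rw [hip]
      rw [IsometryEquiv.symm_apply_eq]
      rw [epow (k+1) m, ← hnm]
  refine ⟨e, fun z => ?_⟩
  rw [Metric.dense_iff]
  intro w r hr
  obtain ⟨n, -, hn⟩ := htail 0 z (r/2) (by positivity)
  obtain ⟨m, -, hm⟩ := htail 0 w (r/2) (by positivity)
  refine ⟨(e ^ ((m:ℤ) - n)) z, ?_, ⟨(m:ℤ) - n, rfl⟩⟩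
  rw [Metric.mem_ball]
  have h1 : (e ^ ((m:ℤ) - n)) (xg n) = xg m := ezpow _ n m (by ring)
  calc dist ((e ^ ((m:ℤ)-n)) z) w
      ≤ dist ((e ^ ((m:ℤ)-n)) z) ((e ^ ((m:ℤ)-n)) (xg n)) + dist ((e ^ ((m:ℤ)-n)) (xg n)) w :=
        dist_triangle _ _ _
  _ = dist z (xg n) + dist (xg m) w := by rw [IsometryEquiv.dist_eq, h1]
  _ < r := by
      rw [dist_comm z (xg n)]
      linarith
end
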